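/- arXiv:1406.6713 — 13 statements merged into one kernel-verified Lean document; each statement's English description precedes it below -/
import Mathlib

section
/- Let m and n be integers greater than 1. If a subset X of the discrete torus T_{m×n} satisfies the no-three-in-line condition, then X has at most 2·gcd(m,n) elements. Consequently τ(T_{m×n}) ≤ 2·gcd(m,n). -/
/-- Projection `π_{m,n} : ℤ×ℤ → (ℤ/mℤ)×(ℤ/nℤ)`. -/
def torusProj (m n : ℕ) (P : ℤ × ℤ) : ZMod m × ZMod n :=
  ((P.1 : ZMod m), (P.2 : ZMod n))

/-- `L` is a line on the discrete torus `T_{m×n}`: the image under `π_{m,n}`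
of `{(a+uk, b+vk) : k ∈ ℤ}` with `gcd(u,v)=1`. -/
def IsTorusLine (m n : ℕ) (L : Set (ZMod m × ZMod n)) : Prop :=
  ∃ a b u v : ℤ, Int.gcd u v = 1 ∧
    L = torusProj m n '' {P : ℤ × ℤ | ∃ k : ℤ, P = (a + u * k, b + v * k)}

/-- `X` satisfies the no-three-in-line condition on `T_{m×n}`:
no three distinct points of `X` lie on a common line. -/
def NoThreeInLine (m n : ℕ) (X : Set (ZMod m × ZMod n)) : Prop :=
  ∀ L : Set (ZMod m × ZMod n), IsTorusLine m n L →
    ∀ A ∈ X, ∀ B ∈ X, ∀ C ∈ X,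
      A ∈ L → B ∈ L → C ∈ L → A = B ∨ A = C ∨ B = C

/-- `τ(T_{m×n})`: the maximum cardinality of a subset of `T_{m×n}`
satisfying the no-three-in-line condition. -/
noncomputable def tau (m n : ℕ) : ℕ :=
  sSup {k : ℕ | ∃ X : Set (ZMod m × ZMod n), NoThreeInLine m n X ∧ X.ncard = k}

/-- The reduction map `ρ : T_{m×n} → T_{p×p}` (for `p ∣ m`, `p ∣ n`). -/
def torusRed (m n p : ℕ) (hm : p ∣ m) (hn : p ∣ n)
    (q : ZMod m × ZMod n) : ZMod p × ZMod p :=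
  (ZMod.castHom hm (ZMod p) q.1, ZMod.castHom hn (ZMod p) q.2)

/-- The determinant `D(A,B,C)` with rows `(1,1,1)`, x-coords, y-coords. -/
def detD (A B C : ℤ × ℤ) : ℤ :=
  Matrix.det !![1, 1, 1; A.1, B.1, C.1; A.2, B.2, C.2]

/-- Each residue class of `x - y` modulo `gcd m n` is a torus line (direction `(1,1)`). -/
lemma diag_class_is_line (m n : ℕ) (hm : 1 < m) (hn : 1 < n) (c : ZMod (Nat.gcd m n)) :
    IsTorusLine m n {q : ZMod m × ZMod n |
      ZMod.castHom (Nat.gcd_dvd_left m n) (ZMod (Nat.gcd m n)) q.1 -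
      ZMod.castHom (Nat.gcd_dvd_right m n) (ZMod (Nat.gcd m n)) q.2 = c} := by
  haveI : NeZero m := ⟨by omega⟩
  haveI : NeZero n := ⟨by omega⟩
  haveI : NeZero (Nat.gcd m n) := ⟨Nat.gcd_ne_zero_left (by omega)⟩
  obtain ⟨cc, hcc⟩ : ∃ cc : ℤ, (cc : ZMod (Nat.gcd m n)) = c :=
    ⟨(c.val : ℤ), by push_cast; simp [ZMod.natCast_val, ZMod.cast_id]⟩
  refine ⟨cc, 0, 1, 1, by norm_num, ?_⟩
  ext q
  simp only [Set.mem_setOf_eq, Set.mem_image]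
  constructor
  · intro hq
    set X0 : ℤ := (q.1.val : ℤ) with hX0
    set Y0 : ℤ := (q.2.val : ℤ) with hY0
    have hx : (X0 : ZMod m) = q.1 := by simp [hX0, ZMod.natCast_val, ZMod.cast_id]
    have hy : (Y0 : ZMod n) = q.2 := by simp [hY0, ZMod.natCast_val, ZMod.cast_id]
    have hdvd : ((Nat.gcd m n : ℕ) : ℤ) ∣ (X0 - Y0 - cc) := by
      rw [← ZMod.intCast_zmod_eq_zero_iff_dvd]
      rw [← hx, ← hy, map_intCast, map_intCast] at hq
      push_cast
      linear_combination hq - hcc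
    obtain ⟨t, ht⟩ := hdvd
    have hbez : ((Nat.gcd m n : ℕ) : ℤ) = m * Nat.gcdA m n + n * Nat.gcdB m n :=
      Nat.gcd_eq_gcd_ab m n
    set k : ℤ := Y0 + n * Nat.gcdB m n * t with hk
    refine ⟨(cc + 1 * k, 0 + 1 * k), ⟨k, rfl⟩, ?_⟩
    have h1 : ((cc + 1 * k : ℤ) : ZMod m) = q.1 := by
      rw [← hx, ← sub_eq_zero, ← Int.cast_sub, ZMod.intCast_zmod_eq_zero_iff_dvd]
      refine ⟨-(Nat.gcdA m n * t), ?_⟩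
      have h : cc + 1 * k - X0 = (n : ℤ) * Nat.gcdB m n * t - (X0 - Y0 - cc) := by
        rw [hk]; ring
      rw [h, ht, hbez]; ring
    have h2 : ((0 + 1 * k : ℤ) : ZMod n) = q.2 := by
      rw [← hy, ← sub_eq_zero, ← Int.cast_sub, ZMod.intCast_zmod_eq_zero_iff_dvd]
      exact ⟨Nat.gcdB m n * t, by rw [hk]; ring⟩
    exact Prod.ext h1 h2
  · rintro ⟨P, ⟨k, rfl⟩, rfl⟩
    simp only [torusProj, map_intCast]
    push_cast
    linear_combination hcc

theorem no_three_in_line_card_le' (m n : ℕ) (hm : 1 < m) (hn : 1 < n) :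
    (∀ X : Set (ZMod m × ZMod n), NoThreeInLine m n X → X.ncard ≤ 2 * Nat.gcd m n) ∧
    tau m n ≤ 2 * Nat.gcd m n := by
  haveI : NeZero m := ⟨by omega⟩
  haveI : NeZero n := ⟨by omega⟩
  haveI : NeZero (Nat.gcd m n) := ⟨Nat.gcd_ne_zero_left (by omega)⟩
  set f : ZMod m × ZMod n → ZMod (Nat.gcd m n) := fun q =>
    ZMod.castHom (Nat.gcd_dvd_left m n) (ZMod (Nat.gcd m n)) q.1 -
    ZMod.castHom (Nat.gcd_dvd_right m n) (ZMod (Nat.gcd m n)) q.2 with hf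
  have main : ∀ X : Set (ZMod m × ZMod n), NoThreeInLine m n X →
      X.ncard ≤ 2 * Nat.gcd m n := by
    intro X hX
    have hXfin : X.Finite := Set.toFinite X
    rw [Set.ncard_eq_toFinset_card X hXfin]
    set F := hXfin.toFinset with hF
    have hFmem : ∀ q, q ∈ F ↔ q ∈ X := fun q => Set.Finite.mem_toFinset hXfin
    calc F.card = ∑ c : ZMod (Nat.gcd m n), (F.filter (fun q => f q = c)).card :=
          Finset.card_eq_sum_card_fiberwise (fun x _ => Finset.mem_univ _)
      _ ≤ ∑ _c : ZMod (Nat.gcd m n), 2 := by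
          refine Finset.sum_le_sum fun c _ => ?_
          by_contra hlt
          push_neg at hlt
          rw [Finset.two_lt_card] at hlt
          obtain ⟨A, hA, B, hB, C, hC, hAB, hAC, hBC⟩ := hlt
          simp only [Finset.mem_filter, hFmem] at hA hB hC
          rcases hX _ (diag_class_is_line m n hm hn c) A hA.1 B hB.1 C hC.1
            hA.2 hB.2 hC.2 with h | h | h
          exacts [hAB h, hAC h, hBC h]
      _ = 2 * Nat.gcd m n := by
          rw [Finset.sum_const, Finset.card_univ, ZMod.card, smul_eq_mul, mul_comm]
  refine ⟨main, ?_⟩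
  refine csSup_le ⟨0, ∅, ?_, by simp⟩ ?_
  · intro L hL A hA; exact absurd hA (Set.notMem_empty A)
  · rintro k ⟨X, hX, rfl⟩
    exact main X hX
/-- Theorem 1.1: any no-three-in-line set in T_{m×n} has at most 2·gcd(m,n) points;
consequently τ(T_{m×n}) ≤ 2·gcd(m,n). -/
theorem no_three_in_line_card_le (m n : ℕ) (hm : 1 < m) (hn : 1 < n) :
    (∀ X : Set (ZMod m × ZMod n), NoThreeInLine m n X → X.ncard ≤ 2 * Nat.gcd m n) ∧
    tau m n ≤ 2 * Nat.gcd m n := by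
  exact no_three_in_line_card_le' m n hm hn
end

section
/- Let m and n be integers greater than 1 with gcd(m,n) = 1. Then τ(T_{m×n}) = 2; that is, the maximum size of a subset of T_{m×n} with no three points on a common line is exactly 2. -/
/-- When `gcd(m,n)=1`, the whole torus is a single line (the diagonal). -/
lemma univ_isTorusLine (m n : ℕ) (hm : 1 < m) (hn : 1 < n)
    (h : Nat.gcd m n = 1) : IsTorusLine m n Set.univ := by
  haveI : NeZero m := ⟨by omega⟩
  haveI : NeZero n := ⟨by omega⟩
  refine ⟨0, 0, 1, 1, by norm_num, ?_⟩
  ext q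
  simp only [Set.mem_univ, true_iff, Set.mem_image, Set.mem_setOf_eq]
  obtain ⟨k, hk1, hk2⟩ := Nat.chineseRemainder h q.1.val q.2.val
  refine ⟨((k : ℤ), (k : ℤ)), ⟨(k : ℤ), by ring_nf⟩, ?_⟩
  have h1 : ((k : ℕ) : ZMod m) = q.1 := by
    rw [ZMod.natCast_eq_natCast_iff _ _ _ |>.mpr hk1, ZMod.natCast_val, ZMod.cast_id]
  have h2 : ((k : ℕ) : ZMod n) = q.2 := by
    rw [ZMod.natCast_eq_natCast_iff _ _ _ |>.mpr hk2, ZMod.natCast_val, ZMod.cast_id]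
  simp [torusProj, h1, h2]

lemma ncard_le_two_of_noThree (m n : ℕ) (hm : 1 < m) (hn : 1 < n)
    (h : Nat.gcd m n = 1) (X : Set (ZMod m × ZMod n)) (hX : NoThreeInLine m n X) :
    X.ncard ≤ 2 := by
  haveI : NeZero m := ⟨by omega⟩
  haveI : NeZero n := ⟨by omega⟩
  by_contra hc
  push_neg at hc
  obtain ⟨a, ha, b, hb, c, hc, hab, hac, hbc⟩ :=
    (Set.two_lt_ncard (Set.toFinite X)).mp hc
  have := hX Set.univ (univ_isTorusLine m n hm hn h) a ha b hb c hc
    (Set.mem_univ _) (Set.mem_univ _) (Set.mem_univ _)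
  tauto

/-- Theorem 1.2(1): if gcd(m,n) = 1 then τ(T_{m×n}) = 2. -/
theorem tau_eq_two_of_coprime (m n : ℕ) (hm : 1 < m) (hn : 1 < n)
    (h : Nat.gcd m n = 1) : tau m n = 2 := by
  haveI : NeZero m := ⟨by omega⟩
  haveI : NeZero n := ⟨by omega⟩
  have hmem : 2 ∈ {k : ℕ | ∃ X : Set (ZMod m × ZMod n),
      NoThreeInLine m n X ∧ X.ncard = k} := by
    refine ⟨{((0 : ZMod m), (0 : ZMod n)), ((1 : ZMod m), (0 : ZMod n))}, ?_, ?_⟩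
    · intro L _ A hA B hB C hC _ _ _
      simp only [Set.mem_insert_iff, Set.mem_singleton_iff] at hA hB hC
      rcases hA with rfl | rfl <;> rcases hB with rfl | rfl <;>
        rcases hC with rfl | rfl <;> tauto
    · haveI : Fact (1 < m) := ⟨hm⟩
      refine Set.ncard_pair ?_
      intro hEq
      exact zero_ne_one (congrArg Prod.fst hEq)
  have hbd : ∀ k ∈ {k : ℕ | ∃ X : Set (ZMod m × ZMod n),
      NoThreeInLine m n X ∧ X.ncard = k}, k ≤ 2 := by
    rintro k ⟨X, hX, rfl⟩
    exact ncard_le_two_of_noThree m n hm hn h X hX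
  exact le_antisymm (csSup_le ⟨2, hmem⟩ hbd) (le_csSup ⟨2, hbd⟩ hmem)
end

section
/- Let m and n be integers greater than 1 with gcd(m,n) = 2. Then τ(T_{m×n}) = 4; that is, the maximum size of a subset of T_{m×n} with no three points on a common line is exactly 4. -/
/-!
Write `m = 2m'`, `n = 2n'` with `gcd(m', n') = 1`, and let `ρ : T_{m×n} → (ℤ/2)²` be reduction
mod 2. Along a line `k ↦ (a + uk, b + vk)` the value of `ρ` depends only on `k mod 2`, so among
three points of a line two have the same `ρ`; hence four points with distinct `ρ` have no three
in line. Conversely one of `m'`, `n'` is odd, say `n'`. If `ρ A = ρ B` and `ρ C - ρ A ≠ (0, 1)`,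
then `A`, `B`, `C` lie on a line of direction `(1, c)`: writing `C - A = (p, q)`, take
`c ≡ 1 (mod n')` and `c ≡ q (mod 2)`, so that `c p ≡ q (mod 2)` (if `p` is even, so is `q`), and
solve the remaining congruences by the Chinese remainder theorem. Among five points one always
finds such a triple.
-/

theorem IsCoprime.exists_dvd_sub_and_dvd_sub {R : Type*} [CommRing R] {a b : R}
    (h : IsCoprime a b) (x y : R) : ∃ e, a ∣ e - x ∧ b ∣ e - y := by
  obtain ⟨s, t, hst⟩ := h
  exact ⟨y * (s * a) + x * (t * b), ⟨s * (y - x), by linear_combination x * hst⟩,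
    ⟨t * (x - y), by linear_combination y * hst⟩⟩

theorem exists_slope_of_odd {m' n' : ℤ} (hcop : IsCoprime m' n') (hn' : Odd n') {p q : ℤ}
    (hpq : Even p → Even q) (x y : ℤ) :
    ∃ c k₁ k₂ : ℤ, 2 * m' ∣ k₁ - 2 * x ∧ 2 * n' ∣ c * k₁ - 2 * y ∧
      2 * m' ∣ k₂ - p ∧ 2 * n' ∣ c * k₂ - q := by
  have h2n : IsCoprime 2 n' := Int.isCoprime_two_left.2 hn'
  obtain ⟨c, hc₂, hcn⟩ := h2n.exists_dvd_sub_and_dvd_sub q 1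
  obtain ⟨e, hem, hen⟩ := hcop.exists_dvd_sub_and_dvd_sub x y
  obtain ⟨k, hkm, hkn⟩ := (h2n.mul_left hcop).exists_dvd_sub_and_dvd_sub p q
  have hkp₂ : 2 ∣ k - p := (dvd_mul_right 2 m').trans hkm
  have hqp : 2 ∣ q * (p - 1) :=
    even_iff_two_dvd.1 <| Int.even_mul.2 <| (em (Even p)).imp hpq Int.even_sub_one.2
  refine ⟨c, 2 * e, k, ?_, ?_, hkm, h2n.mul_dvd ?_ ?_⟩
  · rw [← mul_sub]
    exact mul_dvd_mul_left 2 hem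
  · rw [show c * (2 * e) - 2 * y = 2 * ((c - 1) * e + (e - y)) by ring]
    exact mul_dvd_mul_left 2 (dvd_add (hcn.mul_right e) hen)
  · rw [show c * k - q = (c - q) * k + q * (k - p) + q * (p - 1) by ring]
    exact dvd_add (dvd_add (hc₂.mul_right k) (hkp₂.mul_left q)) hqp
  · rw [show c * k - q = (c - 1) * k + (k - q) by ring]
    exact dvd_add (hcn.mul_right k) hkn

theorem Nat.Coprime.odd_or_odd {a b : ℕ} (h : a.Coprime b) : Odd a ∨ Odd b := by
  by_contra! hab
  simp only [Nat.not_odd_iff_even] at hab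
  have := Nat.dvd_gcd hab.1.two_dvd hab.2.two_dvd
  rw [h.gcd_eq_one] at this
  omega

theorem Int.even_imp_even_of_cast_ne {p q : ℤ} (h : ((p : ZMod 2), (q : ZMod 2)) ≠ (0, 1)) :
    Even p → Even q := fun hp ↦ by
  by_contra hq
  exact h (Prod.ext (ZMod.intCast_eq_zero_iff_even.2 hp)
    (ZMod.intCast_eq_one_iff_odd.2 (Int.not_even_iff_odd.1 hq)))

section Torus

variable {m n : ℕ}

theorem torusProj_add (P Q : ℤ × ℤ) :
    torusProj m n (P + Q) = torusProj m n P + torusProj m n Q := by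
  simp [torusProj]

theorem torusProj_surjective : Function.Surjective (torusProj m n) := fun A ↦ by
  obtain ⟨a, ha⟩ := ZMod.intCast_surjective A.1
  obtain ⟨b, hb⟩ := ZMod.intCast_surjective A.2
  exact ⟨(a, b), Prod.ext ha hb⟩

theorem torusProj_eq_torusProj_iff {P Q : ℤ × ℤ} :
    torusProj m n P = torusProj m n Q ↔ (m : ℤ) ∣ P.1 - Q.1 ∧ (n : ℤ) ∣ P.2 - Q.2 := by
  simp [torusProj, Prod.ext_iff, ZMod.intCast_eq_intCast_iff_dvd_sub, dvd_sub_comm]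

theorem exists_isTorusLine_forall_add_mem {u v : ℤ} (huv : Int.gcd u v = 1)
    (A : ZMod m × ZMod n) :
    ∃ L, IsTorusLine m n L ∧ ∀ k : ℤ, A + torusProj m n (u * k, v * k) ∈ L := by
  obtain ⟨P, rfl⟩ := torusProj_surjective A
  refine ⟨_, ⟨P.1, P.2, u, v, huv, rfl⟩, fun k ↦ ⟨P + (u * k, v * k), ⟨k, rfl⟩, ?_⟩⟩
  exact torusProj_add _ _

theorem exists_direction_of_gcd_eq_two (hmn : Nat.gcd m n = 2) :
    ∃ b : ZMod 2 × ZMod 2, b ≠ 0 ∧ ∀ x y p q : ℤ, ((p : ZMod 2), (q : ZMod 2)) ≠ b →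
      ∃ u v k₁ k₂ : ℤ, Int.gcd u v = 1 ∧
        torusProj m n (u * k₁, v * k₁) = torusProj m n (2 * x, 2 * y) ∧
        torusProj m n (u * k₂, v * k₂) = torusProj m n (p, q) := by
  obtain ⟨m', rfl⟩ : 2 ∣ m := hmn ▸ Nat.gcd_dvd_left m n
  obtain ⟨n', rfl⟩ : 2 ∣ n := hmn ▸ Nat.gcd_dvd_right _ n
  have hcop : m'.Coprime n' := by
    rw [Nat.gcd_mul_left] at hmn
    omega
  have hcop' : IsCoprime (m' : ℤ) n' := Nat.isCoprime_iff_coprime.2 hcop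
  simp only [torusProj_eq_torusProj_iff, Nat.cast_mul, Nat.cast_ofNat]
  rcases hcop.odd_or_odd with hm' | hn'
  · refine ⟨(1, 0), by decide, fun x y p q hpq ↦ ?_⟩
    have hqp := Int.even_imp_even_of_cast_ne fun h ↦ hpq (congrArg Prod.swap h)
    obtain ⟨c, k₁, k₂, h₁, h₂, h₃, h₄⟩ := exists_slope_of_odd hcop'.symm hm'.natCast hqp y x
    exact ⟨c, 1, k₁, k₂, Int.gcd_one_right c, by simpa using ⟨h₂, h₁⟩, by simpa using ⟨h₄, h₃⟩⟩
  · refine ⟨(0, 1), by decide, fun x y p q hpq ↦ ?_⟩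
    obtain ⟨c, k₁, k₂, h₁, h₂, h₃, h₄⟩ :=
      exists_slope_of_odd hcop' hn'.natCast (Int.even_imp_even_of_cast_ne hpq) x y
    exact ⟨1, c, k₁, k₂, Int.gcd_one_left c, by simpa using ⟨h₁, h₂⟩, by simpa using ⟨h₃, h₄⟩⟩

section Parity

variable (hm : 2 ∣ m) (hn : 2 ∣ n)

theorem torusRed_sub (A B : ZMod m × ZMod n) :
    torusRed m n 2 hm hn (A - B) = torusRed m n 2 hm hn A - torusRed m n 2 hm hn B :=
  Prod.ext (map_sub _ _ _) (map_sub _ _ _)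

theorem torusRed_torusProj (P : ℤ × ℤ) :
    torusRed m n 2 hm hn (torusProj m n P) = ((P.1 : ZMod 2), (P.2 : ZMod 2)) := by
  simp [torusRed, torusProj]

theorem IsTorusLine.torusRed_eq_or {L : Set (ZMod m × ZMod n)} (hL : IsTorusLine m n L)
    {A B C : ZMod m × ZMod n} (hA : A ∈ L) (hB : B ∈ L) (hC : C ∈ L) :
    torusRed m n 2 hm hn A = torusRed m n 2 hm hn B ∨
      torusRed m n 2 hm hn A = torusRed m n 2 hm hn C ∨
      torusRed m n 2 hm hn B = torusRed m n 2 hm hn C := by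
  obtain ⟨a, b, u, v, -, rfl⟩ := hL
  obtain ⟨_, ⟨k₁, rfl⟩, rfl⟩ := hA
  obtain ⟨_, ⟨k₂, rfl⟩, rfl⟩ := hB
  obtain ⟨_, ⟨k₃, rfl⟩, rfl⟩ := hC
  simp only [torusRed_torusProj, Int.cast_add, Int.cast_mul]
  rcases (by decide : ∀ x y z : ZMod 2, x = y ∨ x = z ∨ y = z) k₁ k₂ k₃ with h | h | h <;>
    simp [h]

theorem noThreeInLine_of_injOn_torusRed {X : Set (ZMod m × ZMod n)}
    (hX : Set.InjOn (torusRed m n 2 hm hn) X) : NoThreeInLine m n X :=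
  fun _ hL _ hA _ hB _ hC hAL hBL hCL ↦
    (hL.torusRed_eq_or hm hn hAL hBL hCL).imp (hX hA hB) (Or.imp (hX hA hC) (hX hB hC))

theorem exists_forall_collinear_of_gcd_eq_two (hmn : Nat.gcd m n = 2) :
    ∃ b : ZMod 2 × ZMod 2, b ≠ 0 ∧ ∀ A B C : ZMod m × ZMod n,
      torusRed m n 2 hm hn A = torusRed m n 2 hm hn B →
      torusRed m n 2 hm hn C - torusRed m n 2 hm hn A ≠ b →
      ∃ L, IsTorusLine m n L ∧ A ∈ L ∧ B ∈ L ∧ C ∈ L := by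
  obtain ⟨b, hb, hdir⟩ := exists_direction_of_gcd_eq_two hmn
  refine ⟨b, hb, fun A B C hAB hC ↦ ?_⟩
  obtain ⟨P, hP⟩ := torusProj_surjective (B - A)
  obtain ⟨Q, hQ⟩ := torusProj_surjective (C - A)
  have hPeven : ((P.1 : ZMod 2), (P.2 : ZMod 2)) = 0 := by
    rw [← torusRed_torusProj hm hn, hP, torusRed_sub, hAB, sub_self]
  obtain ⟨x, hx⟩ := (ZMod.intCast_eq_zero_iff_even.1 (congrArg Prod.fst hPeven)).two_dvd
  obtain ⟨y, hy⟩ := (ZMod.intCast_eq_zero_iff_even.1 (congrArg Prod.snd hPeven)).two_dvd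
  rw [← torusRed_sub, ← hQ, torusRed_torusProj] at hC
  obtain ⟨u, v, k₁, k₂, huv, h₁, h₂⟩ := hdir x y Q.1 Q.2 hC
  obtain ⟨L, hL, hmem⟩ := exists_isTorusLine_forall_add_mem huv A
  refine ⟨L, hL, by simpa [torusProj, Prod.mk_zero_zero] using hmem 0, ?_, ?_⟩
  · simpa [h₁, ← hx, ← hy, hP] using hmem k₁
  · simpa [h₂, hQ] using hmem k₂

end Parity

theorem exists_noThreeInLine_ncard_eq_four (hm : 2 ∣ m) (hn : 2 ∣ n) :
    ∃ X : Set (ZMod m × ZMod n), NoThreeInLine m n X ∧ X.ncard = 4 := by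
  let lift (v : ZMod 2 × ZMod 2) : ZMod m × ZMod n := (v.1.val, v.2.val)
  have hlift : Function.LeftInverse (torusRed m n 2 hm hn) lift := fun v ↦ by
    simp [lift, torusRed]
  refine ⟨Set.range lift, noThreeInLine_of_injOn_torusRed hm hn ?_, ?_⟩
  · exact Function.Injective.injOn_range (hlift.comp_eq_id ▸ Function.injective_id)
  · rw [Set.ncard_range_of_injective hlift.injective]
    simp

end Torus

theorem Finset.exists_triple_map_eq_map_sub_ne {α G : Type*} [AddGroup G] [Fintype G]
    (f : α → G) {b : G} (hb : b ≠ 0) {S : Finset α}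
    (hG : Fintype.card G < S.card) (h4 : 4 < S.card) :
    ∃ A ∈ S, ∃ B ∈ S, ∃ C ∈ S, A ≠ B ∧ A ≠ C ∧ B ≠ C ∧ f A = f B ∧ f C - f A ≠ b := by
  classical
  by_cases hbig : ∃ g, 2 < (S.filter (f · = g)).card
  · obtain ⟨g, hg⟩ := hbig
    obtain ⟨A, hA, B, hB, C, hC, hAB, hAC, hBC⟩ := Finset.two_lt_card.1 hg
    simp only [Finset.mem_filter] at hA hB hC
    refine ⟨A, hA.1, B, hB.1, C, hC.1, hAB, hAC, hBC, hA.2.trans hB.2.symm, ?_⟩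
    rw [hC.2, hA.2, sub_self]
    exact hb.symm
  simp only [not_exists, not_lt] at hbig
  obtain ⟨A, hA, B, hB, hAB, hfAB⟩ := Finset.exists_ne_map_eq_of_card_lt_of_maps_to
    (t := Finset.univ) (by simpa) (fun a _ ↦ Finset.mem_univ (f a))
  have hsmall : (S.filter (fun P ↦ f P = f A ∨ f P = b + f A)).card < S.card := by
    rw [Finset.filter_or]
    have := Finset.card_union_le (S.filter (f · = f A)) (S.filter (f · = b + f A))
    have := hbig (f A)
    have := hbig (b + f A)
    omega
  obtain ⟨C, hC, hCn⟩ := Finset.exists_mem_notMem_of_card_lt_card hsmall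
  simp only [Finset.mem_filter, not_and, not_or] at hCn
  obtain ⟨hCA, hCb⟩ := hCn hC
  refine ⟨A, hA, B, hB, C, hC, hAB, ?_, ?_, hfAB, fun h ↦ hCb (eq_add_of_sub_eq h)⟩
  · rintro rfl
    exact hCA rfl
  · rintro rfl
    exact hCA hfAB.symm

theorem ncard_le_four_of_noThreeInLine {m n : ℕ} (hmn : Nat.gcd m n = 2)
    {X : Set (ZMod m × ZMod n)} (hX : NoThreeInLine m n X) : X.ncard ≤ 4 := by
  have hm : 2 ∣ m := hmn ▸ Nat.gcd_dvd_left m n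
  have hn : 2 ∣ n := hmn ▸ Nat.gcd_dvd_right m n
  obtain ⟨b, hb, hcol⟩ := exists_forall_collinear_of_gcd_eq_two hm hn hmn
  by_contra! h5
  have hfin : X.Finite := Set.finite_of_ncard_pos (by omega)
  rw [Set.ncard_eq_toFinset_card X hfin] at h5
  obtain ⟨A, hA, B, hB, C, hC, hAB, hAC, hBC, hfAB, hfC⟩ :=
    Finset.exists_triple_map_eq_map_sub_ne (torusRed m n 2 hm hn) hb (by simpa using h5) h5
  simp only [Set.Finite.mem_toFinset] at hA hB hC
  obtain ⟨L, hL, hAL, hBL, hCL⟩ := hcol A B C hfAB hfC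
  rcases hX L hL A hA B hB C hC hAL hBL hCL with h | h | h <;> contradiction

theorem tau_eq_of_forall_ncard_le {m n k : ℕ}
    (hk : ∃ X : Set (ZMod m × ZMod n), NoThreeInLine m n X ∧ X.ncard = k)
    (hle : ∀ X : Set (ZMod m × ZMod n), NoThreeInLine m n X → X.ncard ≤ k) : tau m n = k := by
  refine IsGreatest.csSup_eq ⟨hk, ?_⟩
  rintro _ ⟨X, hX, rfl⟩
  exact hle X hX

theorem tau_eq_four_of_gcd_eq_two_general (m n : ℕ)
    (h : Nat.gcd m n = 2) : tau m n = 4 :=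
  tau_eq_of_forall_ncard_le
    (exists_noThreeInLine_ncard_eq_four (h ▸ Nat.gcd_dvd_left m n) (h ▸ Nat.gcd_dvd_right m n))
    fun _ ↦ ncard_le_four_of_noThreeInLine h

/-- Theorem 1.2(2): if gcd(m,n) = 2 then τ(T_{m×n}) = 4. -/
theorem tau_eq_four_of_gcd_eq_two (m n : ℕ) (hm : 1 < m) (hn : 1 < n)
    (h : Nat.gcd m n = 2) : tau m n = 4 :=
  tau_eq_four_of_gcd_eq_two_general m n h
end

section
/- Let m and n be integers greater than 1 and let p = gcd(m,n) be an odd prime. If gcd(p·m, n) = p² or gcd(m, p·n) = p², then τ(T_{m×n}) = 2p. -/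
/-- The construction: points `(i, p i² + e)` for `i < p`, `e < 2`. -/
def torusPts (m n p : ℕ) (x : Fin p × Fin 2) : ZMod m × ZMod n :=
  (((x.1.val : ℤ) : ZMod m), (((p : ℤ) * (x.1.val : ℤ)^2 + (x.2.val : ℤ) : ℤ) : ZMod n))

lemma torusPts_injective (m n p : ℕ) (hpm : p ≤ m) (hn2 : 2 ≤ n) :
    Function.Injective (torusPts m n p) := by
  rintro ⟨i, e⟩ ⟨j, f⟩ h
  have h1 := congrArg Prod.fst h
  have h2 := congrArg Prod.snd h
  simp only [torusPts] at h1 h2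
  have hij : i = j := by
    have h1' : ((i.val : ℕ) : ZMod m) = ((j.val : ℕ) : ZMod m) := by exact_mod_cast h1
    have := congrArg ZMod.val h1'
    rw [ZMod.val_cast_of_lt (lt_of_lt_of_le i.isLt hpm),
        ZMod.val_cast_of_lt (lt_of_lt_of_le j.isLt hpm)] at this
    exact Fin.ext this
  subst hij
  have h2' : ((e.val : ℤ) : ZMod n) = ((f.val : ℤ) : ZMod n) := by
    linear_combination (norm := (push_cast; ring_nf)) h2
  have h2'' : ((e.val : ℕ) : ZMod n) = ((f.val : ℕ) : ZMod n) := by exact_mod_cast h2'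
  have := congrArg ZMod.val h2''
  rw [ZMod.val_cast_of_lt (lt_of_lt_of_le e.isLt hn2),
      ZMod.val_cast_of_lt (lt_of_lt_of_le f.isLt hn2)] at this
  exact congrArg (Prod.mk i) (Fin.ext this)

lemma torusPts_noThree (m n p : ℕ) (hp : p.Prime) (hpm : p ∣ m) (w : ℕ)
    (hnw : n = p * (p * w)) :
    NoThreeInLine m n (Set.range (torusPts m n p)) := by
  have hp2 : 2 ≤ p := hp.two_le
  haveI : NeZero p := ⟨by omega⟩
  haveI : Fact p.Prime := ⟨hp⟩
  have hp0 : ((p:ℤ)) ≠ 0 := by exact_mod_cast hp.pos.ne'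
  have hpmZ : (p:ℤ) ∣ (m:ℤ) := Int.natCast_dvd_natCast.mpr hpm
  have hpnZ : (p:ℤ) ∣ (n:ℤ) := Int.natCast_dvd_natCast.mpr ⟨p*w, hnw⟩
  -- helpers
  have hcol : ∀ (i j : Fin p), ((i.val:ℕ):ZMod p) = ((j.val:ℕ):ZMod p) → i = j := by
    intro i j hij
    apply Fin.ext
    have := congrArg ZMod.val hij
    rwa [ZMod.val_cast_of_lt i.isLt, ZMod.val_cast_of_lt j.isLt] at this
  have heps : ∀ (e f : Fin 2), ((e.val:ℕ):ZMod p) = ((f.val:ℕ):ZMod p) → e = f := by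
    intro e f hef
    apply Fin.ext
    have := congrArg ZMod.val hef
    rwa [ZMod.val_cast_of_lt (lt_of_lt_of_le e.isLt hp2),
         ZMod.val_cast_of_lt (lt_of_lt_of_le f.isLt hp2)] at this
  intro L hL A hA B hB C hC hAL hBL hCL
  obtain ⟨a, b, U, V, hUV, rfl⟩ := hL
  obtain ⟨⟨iA, eA⟩, rfl⟩ := hA
  obtain ⟨⟨iB, eB⟩, rfl⟩ := hB
  obtain ⟨⟨iC, eC⟩, rfl⟩ := hC
  obtain ⟨PA, ⟨kA, rfl⟩, hPA⟩ := hAL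
  obtain ⟨PB, ⟨kB, rfl⟩, hPB⟩ := hBL
  obtain ⟨PC, ⟨kC, rfl⟩, hPC⟩ := hCL
  simp only [torusProj, torusPts, Prod.mk.injEq] at hPA hPB hPC
  -- integer congruences
  have mA1 : a + U*kA ≡ ((iA.val:ℤ)) [ZMOD m] := (ZMod.intCast_eq_intCast_iff _ _ m).mp hPA.1
  have mB1 : a + U*kB ≡ ((iB.val:ℤ)) [ZMOD m] := (ZMod.intCast_eq_intCast_iff _ _ m).mp hPB.1
  have mC1 : a + U*kC ≡ ((iC.val:ℤ)) [ZMOD m] := (ZMod.intCast_eq_intCast_iff _ _ m).mp hPC.1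
  have mA2 : b + V*kA ≡ (p:ℤ)*(iA.val:ℤ)^2 + (eA.val:ℤ) [ZMOD n] :=
    (ZMod.intCast_eq_intCast_iff _ _ n).mp hPA.2
  have mB2 : b + V*kB ≡ (p:ℤ)*(iB.val:ℤ)^2 + (eB.val:ℤ) [ZMOD n] :=
    (ZMod.intCast_eq_intCast_iff _ _ n).mp hPB.2
  have mC2 : b + V*kC ≡ (p:ℤ)*(iC.val:ℤ)^2 + (eC.val:ℤ) [ZMOD n] :=
    (ZMod.intCast_eq_intCast_iff _ _ n).mp hPC.2
  have dm1 : U*(kB-kA) ≡ (iB.val:ℤ) - (iA.val:ℤ) [ZMOD m] := by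
    have := mB1.sub mA1
    rwa [show a + U*kB - (a + U*kA) = U*(kB-kA) by ring] at this
  have dm2 : U*(kC-kA) ≡ (iC.val:ℤ) - (iA.val:ℤ) [ZMOD m] := by
    have := mC1.sub mA1
    rwa [show a + U*kC - (a + U*kA) = U*(kC-kA) by ring] at this
  have dn1 : V*(kB-kA) ≡ (p:ℤ)*((iB.val:ℤ)^2 - (iA.val:ℤ)^2) + ((eB.val:ℤ) - (eA.val:ℤ)) [ZMOD n] := by
    have := mB2.sub mA2
    rwa [show b + V*kB - (b + V*kA) = V*(kB-kA) by ring,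
         show (p:ℤ)*(iB.val:ℤ)^2 + (eB.val:ℤ) - ((p:ℤ)*(iA.val:ℤ)^2 + (eA.val:ℤ))
            = (p:ℤ)*((iB.val:ℤ)^2 - (iA.val:ℤ)^2) + ((eB.val:ℤ) - (eA.val:ℤ)) by ring] at this
  have dn2 : V*(kC-kA) ≡ (p:ℤ)*((iC.val:ℤ)^2 - (iA.val:ℤ)^2) + ((eC.val:ℤ) - (eA.val:ℤ)) [ZMOD n] := by
    have := mC2.sub mA2
    rwa [show b + V*kC - (b + V*kA) = V*(kC-kA) by ring,
         show (p:ℤ)*(iC.val:ℤ)^2 + (eC.val:ℤ) - ((p:ℤ)*(iA.val:ℤ)^2 + (eA.val:ℤ))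
            = (p:ℤ)*((iC.val:ℤ)^2 - (iA.val:ℤ)^2) + ((eC.val:ℤ) - (eA.val:ℤ)) by ring] at this
  -- mod-p facts in F := ZMod p
  have f1 : (U:ZMod p)*((kB:ZMod p)-(kA:ZMod p)) = ((iB.val:ℕ):ZMod p) - ((iA.val:ℕ):ZMod p) := by
    have h := (ZMod.intCast_eq_intCast_iff _ _ p).mpr (dm1.of_dvd hpmZ)
    push_cast at h
    linear_combination h
  have f3 : (U:ZMod p)*((kC:ZMod p)-(kA:ZMod p)) = ((iC.val:ℕ):ZMod p) - ((iA.val:ℕ):ZMod p) := by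
    have h := (ZMod.intCast_eq_intCast_iff _ _ p).mpr (dm2.of_dvd hpmZ)
    push_cast at h
    linear_combination h
  have f2 : (V:ZMod p)*((kB:ZMod p)-(kA:ZMod p)) = ((eB.val:ℕ):ZMod p) - ((eA.val:ℕ):ZMod p) := by
    have h := (ZMod.intCast_eq_intCast_iff _ _ p).mpr (dn1.of_dvd hpnZ)
    push_cast at h
    rw [ZMod.natCast_self] at h
    linear_combination h
  have f4 : (V:ZMod p)*((kC:ZMod p)-(kA:ZMod p)) = ((eC.val:ℕ):ZMod p) - ((eA.val:ℕ):ZMod p) := by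
    have h := (ZMod.intCast_eq_intCast_iff _ _ p).mpr (dn2.of_dvd hpnZ)
    push_cast at h
    rw [ZMod.natCast_self] at h
    linear_combination h
  by_cases hU : (U:ZMod p) = 0
  · -- all columns equal, pigeonhole on e
    have hAB : iA = iB := by
      apply hcol
      have h0 : ((iB.val:ℕ):ZMod p) - ((iA.val:ℕ):ZMod p) = 0 := by rw [← f1, hU, zero_mul]
      linear_combination - h0
    have hAC : iA = iC := by
      apply hcol
      have h0 : ((iC.val:ℕ):ZMod p) - ((iA.val:ℕ):ZMod p) = 0 := by rw [← f3, hU, zero_mul]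
      linear_combination - h0
    have hpig : eA = eB ∨ eA = eC ∨ eB = eC := by
      rcases eA with ⟨ea, hea⟩; rcases eB with ⟨eb, heb⟩; rcases eC with ⟨ec, hec⟩
      simp only [Fin.mk.injEq]
      omega
    rcases hpig with hel | hel | hel
    · exact Or.inl (by rw [hAB, hel])
    · exact Or.inr (Or.inl (by rw [hAC, hel]))
    · exact Or.inr (Or.inr (by rw [← hAB, ← hel, hAC, hel]))
  · by_cases hAB : iA = iB
    · -- κ = 0, so eA = eB
      have hk1 : (kB:ZMod p)-(kA:ZMod p) = 0 := by
        rcases mul_eq_zero.mp (show (U:ZMod p)*((kB:ZMod p)-(kA:ZMod p)) = 0 by rw [f1, hAB, sub_self]) with h | h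
        · exact absurd h hU
        · exact h
      have : ((eB.val:ℕ):ZMod p) - ((eA.val:ℕ):ZMod p) = 0 := by rw [← f2, hk1, mul_zero]
      exact Or.inl (by rw [hAB, heps _ _ (sub_eq_zero.mp this).symm])
    · by_cases hAC : iA = iC
      · have hk2 : (kC:ZMod p)-(kA:ZMod p) = 0 := by
          rcases mul_eq_zero.mp (show (U:ZMod p)*((kC:ZMod p)-(kA:ZMod p)) = 0 by rw [f3, hAC, sub_self]) with h | h
          · exact absurd h hU
          · exact h
        have : ((eC.val:ℕ):ZMod p) - ((eA.val:ℕ):ZMod p) = 0 := by rw [← f4, hk2, mul_zero]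
        exact Or.inr (Or.inl (by rw [hAC, heps _ _ (sub_eq_zero.mp this).symm]))
      · by_cases hBC : iB = iC
        · have hk3 : ((kC:ZMod p)-(kA:ZMod p)) - ((kB:ZMod p)-(kA:ZMod p)) = 0 := by
            have f5 : (U:ZMod p)*(((kC:ZMod p)-(kA:ZMod p)) - ((kB:ZMod p)-(kA:ZMod p)))
                = ((iC.val:ℕ):ZMod p) - ((iB.val:ℕ):ZMod p) := by linear_combination f3 - f1
            rcases mul_eq_zero.mp (show (U:ZMod p)*(((kC:ZMod p)-(kA:ZMod p)) - ((kB:ZMod p)-(kA:ZMod p))) = 0 by rw [f5, hBC, sub_self]) with h | h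
            · exact absurd h hU
            · exact h
          have : ((eC.val:ℕ):ZMod p) - ((eB.val:ℕ):ZMod p) = 0 := by
            linear_combination (V:ZMod p)*hk3 - f4 + f2
          exact Or.inr (Or.inr (by rw [hBC, heps _ _ (sub_eq_zero.mp this).symm]))
        · -- all three columns distinct
          exfalso
          have hJI : ((iB.val:ℕ):ZMod p) - ((iA.val:ℕ):ZMod p) ≠ 0 :=
            fun h => hAB (hcol _ _ (sub_eq_zero.mp h).symm)
          have hKI : ((iC.val:ℕ):ZMod p) - ((iA.val:ℕ):ZMod p) ≠ 0 :=
            fun h => hAC (hcol _ _ (sub_eq_zero.mp h).symm)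
          have hKJ : ((iC.val:ℕ):ZMod p) - ((iB.val:ℕ):ZMod p) ≠ 0 :=
            fun h => hBC (hcol _ _ (sub_eq_zero.mp h).symm)
          have hk1 : (kB:ZMod p)-(kA:ZMod p) ≠ 0 := by
            intro h; exact hJI (by rw [← f1, h, mul_zero])
          have hk2 : (kC:ZMod p)-(kA:ZMod p) ≠ 0 := by
            intro h; exact hKI (by rw [← f3, h, mul_zero])
          have hk3 : ((kC:ZMod p)-(kA:ZMod p)) - ((kB:ZMod p)-(kA:ZMod p)) ≠ 0 := by
            intro h
            apply hKJ
            have f5 : (U:ZMod p)*(((kC:ZMod p)-(kA:ZMod p)) - ((kB:ZMod p)-(kA:ZMod p)))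
                = ((iC.val:ℕ):ZMod p) - ((iB.val:ℕ):ZMod p) := by linear_combination f3 - f1
            rw [← f5, h, mul_zero]
          by_cases hV : (V:ZMod p) = 0
          · -- deep case: go mod p² level
            have heAB : eA = eB := by
              apply heps
              have : ((eB.val:ℕ):ZMod p) - ((eA.val:ℕ):ZMod p) = 0 := by rw [← f2, hV, zero_mul]
              exact (sub_eq_zero.mp this).symm
            have heAC : eA = eC := by
              apply heps
              have : ((eC.val:ℕ):ZMod p) - ((eA.val:ℕ):ZMod p) = 0 := by rw [← f4, hV, zero_mul]
              exact (sub_eq_zero.mp this).symm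
            obtain ⟨V', rfl⟩ : (p:ℤ) ∣ V := (ZMod.intCast_zmod_eq_zero_iff_dvd V p).mp hV
            have heABz : (eB.val:ℤ) - (eA.val:ℤ) = 0 := by rw [heAB]; ring
            have heACz : (eC.val:ℤ) - (eA.val:ℤ) = 0 := by rw [heAC]; ring
            -- divide the congruences by p
            have deep : ∀ (kX : ℤ) (iX : Fin p), (p:ℤ)*V'*(kX-kA) ≡ (p:ℤ)*((iX.val:ℤ)^2 - (iA.val:ℤ)^2) [ZMOD n] →
                ((iX.val:ℕ):ZMod p)^2 - ((iA.val:ℕ):ZMod p)^2 = (V':ZMod p)*((kX:ZMod p)-(kA:ZMod p)) := by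
              intro kX iX hcong
              have hdvd : (n:ℤ) ∣ ((p:ℤ)*((iX.val:ℤ)^2 - (iA.val:ℤ)^2) - (p:ℤ)*V'*(kX-kA)) := hcong.dvd
              rw [hnw] at hdvd
              push_cast at hdvd
              have hdvd2 : ((p:ℤ)*(p*w)) ∣ ((p:ℤ)*(((iX.val:ℤ)^2 - (iA.val:ℤ)^2) - V'*(kX-kA))) := by
                convert hdvd using 1 <;> ring
              have hdvd3 : ((p:ℤ)*w) ∣ (((iX.val:ℤ)^2 - (iA.val:ℤ)^2) - V'*(kX-kA)) :=
                (mul_dvd_mul_iff_left hp0).mp hdvd2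
              have hdvd4 : (p:ℤ) ∣ (((iX.val:ℤ)^2 - (iA.val:ℤ)^2) - V'*(kX-kA)) :=
                dvd_trans (dvd_mul_right _ _) hdvd3
              have h0 : ((((iX.val:ℤ)^2 - (iA.val:ℤ)^2) - V'*(kX-kA) : ℤ) : ZMod p) = 0 :=
                (ZMod.intCast_zmod_eq_zero_iff_dvd _ p).mpr hdvd4
              push_cast at h0
              linear_combination h0
            have f6 : ((iB.val:ℕ):ZMod p)^2 - ((iA.val:ℕ):ZMod p)^2
                = (V':ZMod p)*((kB:ZMod p)-(kA:ZMod p)) := by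
              apply deep
              have h := dn1
              rwa [heABz, add_zero] at h
            have f7 : ((iC.val:ℕ):ZMod p)^2 - ((iA.val:ℕ):ZMod p)^2
                = (V':ZMod p)*((kC:ZMod p)-(kA:ZMod p)) := by
              apply deep
              have h := dn2
              rwa [heACz, add_zero] at h
            have e1 : ((kB:ZMod p)-(kA:ZMod p)) *
                ((U:ZMod p)*(((iB.val:ℕ):ZMod p)+((iA.val:ℕ):ZMod p)) - (V':ZMod p)) = 0 := by
              linear_combination (((iB.val:ℕ):ZMod p)+((iA.val:ℕ):ZMod p)) * f1 + f6
            have e2 : ((kC:ZMod p)-(kA:ZMod p)) *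
                ((U:ZMod p)*(((iC.val:ℕ):ZMod p)+((iA.val:ℕ):ZMod p)) - (V':ZMod p)) = 0 := by
              linear_combination (((iC.val:ℕ):ZMod p)+((iA.val:ℕ):ZMod p)) * f3 + f7
            have hUJ : (U:ZMod p)*(((iB.val:ℕ):ZMod p)+((iA.val:ℕ):ZMod p)) - (V':ZMod p) = 0 := by
              rcases mul_eq_zero.mp e1 with h | h
              · exact absurd h hk1
              · exact h
            have hUK : (U:ZMod p)*(((iC.val:ℕ):ZMod p)+((iA.val:ℕ):ZMod p)) - (V':ZMod p) = 0 := by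
              rcases mul_eq_zero.mp e2 with h | h
              · exact absurd h hk2
              · exact h
            have e3 : (U:ZMod p)*(((iC.val:ℕ):ZMod p) - ((iB.val:ℕ):ZMod p)) = 0 := by
              linear_combination hUK - hUJ
            rcases mul_eq_zero.mp e3 with h | h
            · exact hU h
            · exact hKJ h
          · -- V ≠ 0 : epsilon contradiction
            have hBne : ((eB.val:ℕ):ZMod p) - ((eA.val:ℕ):ZMod p) ≠ 0 := by
              rw [← f2]; exact mul_ne_zero hV hk1
            have hCne : ((eC.val:ℕ):ZMod p) - ((eA.val:ℕ):ZMod p) ≠ 0 := by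
              rw [← f4]; exact mul_ne_zero hV hk2
            have heB : eB ≠ eA := fun h => hBne (by rw [h, sub_self])
            have heC : eC ≠ eA := fun h => hCne (by rw [h, sub_self])
            have heBC : eB = eC := by
              rcases eA with ⟨ea, hea⟩; rcases eB with ⟨eb, heb⟩; rcases eC with ⟨ec, hec⟩
              simp only [ne_eq, Fin.mk.injEq] at heB heC ⊢
              omega
            have : (V:ZMod p)*(((kC:ZMod p)-(kA:ZMod p)) - ((kB:ZMod p)-(kA:ZMod p)))
                = ((eC.val:ℕ):ZMod p) - ((eB.val:ℕ):ZMod p) := by linear_combination f4 - f2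
            rw [heBC, sub_self] at this
            exact (mul_ne_zero hV hk3) this

lemma columns_collinear (m n p : ℕ) (hm : 0 < m) (hn : 0 < n) (hpm : p ∣ m)
    (acop : Nat.Coprime (m / p) n)
    (A B C : ZMod m × ZMod n)
    (hAB : ZMod.castHom hpm (ZMod p) A.1 = ZMod.castHom hpm (ZMod p) B.1)
    (hAC : ZMod.castHom hpm (ZMod p) A.1 = ZMod.castHom hpm (ZMod p) C.1) :
    ∃ L, IsTorusLine m n L ∧ A ∈ L ∧ B ∈ L ∧ C ∈ L := by
  haveI : NeZero m := ⟨hm.ne'⟩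
  haveI : NeZero n := ⟨hn.ne'⟩
  have hp : 0 < p := Nat.pos_of_dvd_of_pos hpm hm
  haveI : NeZero p := ⟨hp.ne'⟩
  have hmZ : (m:ℤ) = (p:ℤ) * ((m/p : ℕ):ℤ) := by
    exact_mod_cast congrArg (Nat.cast : ℕ → ℤ) (Nat.mul_div_cancel' hpm).symm
  obtain ⟨x, y, hxy⟩ : IsCoprime ((m/p : ℕ):ℤ) (n:ℤ) := by
    rw [Int.isCoprime_iff_gcd_eq_one, Int.gcd_natCast_natCast]
    exact acop
  have key : ∀ Q : ZMod m × ZMod n, ZMod.castHom hpm (ZMod p) A.1 = ZMod.castHom hpm (ZMod p) Q.1 →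
      Q ∈ (torusProj m n '' {P : ℤ × ℤ | ∃ k : ℤ, P = ((A.1.val:ℤ) + p * k, (A.2.val:ℤ) + 1 * k)}) := by
    intro Q hQ
    obtain ⟨w1, hw1⟩ : (p:ℤ) ∣ ((Q.1.val:ℤ) - (A.1.val:ℤ)) := by
      have h1 : ((A.1.val:ℕ) : ZMod p) = ((Q.1.val:ℕ) : ZMod p) := by
        rwa [ZMod.castHom_apply, ZMod.castHom_apply, ZMod.cast_eq_val, ZMod.cast_eq_val] at hQ
      have h2 : ((((Q.1.val:ℤ) - (A.1.val:ℤ)) : ℤ) : ZMod p) = 0 := by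
        push_cast
        rw [← h1]
        ring
      exact (ZMod.intCast_zmod_eq_zero_iff_dvd _ p).mp h2
    refine ⟨((A.1.val:ℤ) + p * (w1*(n*y) + ((Q.2.val:ℤ) - (A.2.val:ℤ))*((m/p : ℕ)*x)),
            (A.2.val:ℤ) + 1 * (w1*(n*y) + ((Q.2.val:ℤ) - (A.2.val:ℤ))*((m/p : ℕ)*x))),
      ⟨w1*(n*y) + ((Q.2.val:ℤ) - (A.2.val:ℤ))*((m/p : ℕ)*x), rfl⟩, ?_⟩
    have hQ1 : ((Q.1.val : ℤ) : ZMod m) = Q.1 := by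
      push_cast [ZMod.natCast_val, ZMod.cast_id']; rfl
    have hQ2 : ((Q.2.val : ℤ) : ZMod n) = Q.2 := by
      push_cast [ZMod.natCast_val, ZMod.cast_id']; rfl
    have e1 : (((A.1.val:ℤ) + p * (w1*(n*y) + ((Q.2.val:ℤ) - (A.2.val:ℤ))*((m/p : ℕ)*x)) : ℤ) : ZMod m)
        = Q.1 := by
      rw [← hQ1]
      rw [ZMod.intCast_eq_intCast_iff]
      apply Int.ModEq.symm
      rw [Int.modEq_iff_dvd]
      refine ⟨x*(((Q.2.val:ℤ) - (A.2.val:ℤ)) - w1), ?_⟩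
      rw [hmZ]
      linear_combination - hw1 + ((p:ℤ)*w1)*hxy
    have e2 : (((A.2.val:ℤ) + 1 * (w1*(n*y) + ((Q.2.val:ℤ) - (A.2.val:ℤ))*((m/p : ℕ)*x)) : ℤ) : ZMod n)
        = Q.2 := by
      refine Eq.trans ?_ hQ2
      rw [ZMod.intCast_eq_intCast_iff]
      rw [Int.modEq_iff_dvd]
      refine ⟨y*(((Q.2.val:ℤ) - (A.2.val:ℤ)) - w1), ?_⟩
      linear_combination (-(Q.2.val:ℤ) + (A.2.val:ℤ))*hxy
    exact Prod.ext_iff.mpr ⟨e1, e2⟩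
  exact ⟨torusProj m n '' {P : ℤ × ℤ | ∃ k : ℤ, P = ((A.1.val:ℤ) + p * k, (A.2.val:ℤ) + 1 * k)},
    ⟨(A.1.val:ℤ), (A.2.val:ℤ), p, 1, by simp [Int.gcd], rfl⟩, key A rfl, key B hAB, key C hAC⟩

lemma noThree_ncard_le (m n p : ℕ) (hm : 0 < m) (hn : 0 < n) (hpm : p ∣ m)
    (acop : Nat.Coprime (m / p) n)
    (X : Set (ZMod m × ZMod n)) (hX : NoThreeInLine m n X) : X.ncard ≤ 2 * p := by
  classical
  haveI : NeZero m := ⟨hm.ne'⟩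
  haveI : NeZero n := ⟨hn.ne'⟩
  have hp : 0 < p := Nat.pos_of_dvd_of_pos hpm hm
  haveI : NeZero p := ⟨hp.ne'⟩
  have hfin : X.Finite := Set.toFinite X
  set s := hfin.toFinset with hs
  set f : ZMod m × ZMod n → ZMod p := fun q => ZMod.castHom hpm (ZMod p) q.1 with hf
  have hbound : ∀ z ∈ s.image f, (s.filter (fun q => f q = z)).card ≤ 2 := by
    intro z _
    by_contra hgt
    have h3 : 2 < (s.filter (fun q => f q = z)).card := by omega
    obtain ⟨A, hA, B, hB, C, hC, hab, hac, hbc⟩ := Finset.two_lt_card.mp h3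
    simp only [Finset.mem_filter] at hA hB hC
    obtain ⟨L, hL, hAL, hBL, hCL⟩ := columns_collinear m n p hm hn hpm acop A B C
      (hA.2.trans hB.2.symm) (hA.2.trans hC.2.symm)
    rcases hX L hL A (hfin.mem_toFinset.mp hA.1) B (hfin.mem_toFinset.mp hB.1)
      C (hfin.mem_toFinset.mp hC.1) hAL hBL hCL with h | h | h
    exacts [hab h, hac h, hbc h]
  have h1 : s.card ≤ 2 * (s.image f).card := Finset.card_le_mul_card_image s 2 hbound
  have h2 : (s.image f).card ≤ p := le_trans (Finset.card_le_univ _) (le_of_eq (ZMod.card p))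
  rw [Set.ncard_eq_toFinset_card X hfin]
  calc s.card ≤ 2 * (s.image f).card := h1
    _ ≤ 2 * p := by omega

lemma isTorusLine_swap {m n : ℕ} {L : Set (ZMod m × ZMod n)} (h : IsTorusLine m n L) :
    IsTorusLine n m (Prod.swap '' L) := by
  obtain ⟨a, b, u, v, hg, rfl⟩ := h
  refine ⟨b, a, v, u, by rw [Int.gcd_comm]; exact hg, ?_⟩
  have hsets : Prod.swap '' {P : ℤ×ℤ | ∃ k : ℤ, P = (a + u*k, b + v*k)}
      = {P : ℤ×ℤ | ∃ k : ℤ, P = (b + v*k, a + u*k)} := by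
    ext P
    constructor
    · rintro ⟨Q, ⟨k, rfl⟩, rfl⟩
      exact ⟨k, rfl⟩
    · rintro ⟨k, rfl⟩
      exact ⟨(a + u*k, b + v*k), ⟨k, rfl⟩, rfl⟩
  have hcomp : (Prod.swap ∘ torusProj m n) = torusProj n m ∘ (Prod.swap : ℤ×ℤ → ℤ×ℤ) := rfl
  rw [← Set.image_comp, hcomp, Set.image_comp, hsets]

lemma noThree_swap {m n : ℕ} {X : Set (ZMod m × ZMod n)} (h : NoThreeInLine m n X) :
    NoThreeInLine n m (Prod.swap '' X) := by
  intro L hL A hA B hB C hC hAL hBL hCL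
  obtain ⟨A', hA', rfl⟩ := hA
  obtain ⟨B', hB', rfl⟩ := hB
  obtain ⟨C', hC', rfl⟩ := hC
  have hL' : IsTorusLine m n (Prod.swap '' L) := isTorusLine_swap hL
  have mem : ∀ Q : ZMod m × ZMod n, Prod.swap Q ∈ L → Q ∈ Prod.swap '' L := by
    intro Q hQ
    exact ⟨Prod.swap Q, hQ, Prod.swap_swap Q⟩
  rcases h (Prod.swap '' L) hL' A' hA' B' hB' C' hC' (mem _ hAL) (mem _ hBL) (mem _ hCL)
    with h' | h' | h'
  · exact Or.inl (congrArg Prod.swap h')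
  · exact Or.inr (Or.inl (congrArg Prod.swap h'))
  · exact Or.inr (Or.inr (congrArg Prod.swap h'))

lemma tau_comm (m n : ℕ) : tau m n = tau n m := by
  unfold tau
  congr 1
  ext k
  constructor
  · rintro ⟨X, hX, rfl⟩
    exact ⟨Prod.swap '' X, noThree_swap hX, Set.ncard_image_of_injective X Prod.swap_injective⟩
  · rintro ⟨X, hX, rfl⟩
    exact ⟨Prod.swap '' X, noThree_swap hX, Set.ncard_image_of_injective X Prod.swap_injective⟩

lemma tau_eq_of_sq_dvd (m n p : ℕ) (hm : 1 < m) (hn : 1 < n)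
    (hgcd : Nat.gcd m n = p) (hp : p.Prime) (hp2n : p^2 ∣ n) : tau m n = 2 * p := by
  have hm0 : 0 < m := by omega
  have hn0 : 0 < n := by omega
  have hpm : p ∣ m := by rw [← hgcd]; exact Nat.gcd_dvd_left m n
  have hpn : p ∣ n := by rw [← hgcd]; exact Nat.gcd_dvd_right m n
  have hp0 : 0 < p := hp.pos
  -- coprimality of m/p and n
  have acop : Nat.Coprime (m / p) n := by
    have hd : Nat.gcd (m/p) n ∣ p := by
      have h4 : Nat.gcd (m/p) n ∣ Nat.gcd m n :=
        Nat.dvd_gcd (dvd_trans (Nat.gcd_dvd_left _ _) (Nat.div_dvd_of_dvd hpm))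
          (Nat.gcd_dvd_right _ _)
      rwa [hgcd] at h4
    rcases (Nat.Prime.eq_one_or_self_of_dvd hp _ hd) with h1 | h1
    · exact h1
    · exfalso
      have hpd : p ∣ m / p := by
        have h5 := Nat.gcd_dvd_left (m/p) n
        rwa [h1] at h5
      have hp2m : p^2 ∣ m := by
        obtain ⟨c, hc⟩ := hpd
        exact ⟨c, by rw [pow_two, mul_assoc, ← hc, Nat.mul_div_cancel' hpm]⟩
      have : p^2 ∣ p := by
        have h6 := Nat.dvd_gcd hp2m hp2n
        rwa [hgcd] at h6
      have := Nat.le_of_dvd hp0 this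
      nlinarith [hp.two_le]
  -- the set of achievable cardinalities
  have hmem : 2 * p ∈ {k : ℕ | ∃ X : Set (ZMod m × ZMod n), NoThreeInLine m n X ∧ X.ncard = k} := by
    obtain ⟨w, hw⟩ := hp2n
    refine ⟨Set.range (torusPts m n p),
      torusPts_noThree m n p hp hpm w (by rw [hw]; ring), ?_⟩
    have hinj := torusPts_injective m n p (Nat.le_of_dvd hm0 hpm) hn
    rw [← Nat.card_coe_set_eq, Nat.card_range_of_injective hinj]
    simp only [Nat.card_eq_fintype_card, Fintype.card_prod, Fintype.card_fin]
    omega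
  have hub : ∀ k ∈ {k : ℕ | ∃ X : Set (ZMod m × ZMod n), NoThreeInLine m n X ∧ X.ncard = k},
      k ≤ 2 * p := by
    rintro k ⟨X, hX, rfl⟩
    exact noThree_ncard_le m n p hm0 hn0 hpm acop X hX
  refine le_antisymm (csSup_le ⟨2*p, hmem⟩ hub) (le_csSup ⟨2*p, hub⟩ hmem)


/-- Theorem 1.2(3a): if p = gcd(m,n) is an odd prime and gcd(pm,n) = p² or
gcd(m,pn) = p², then τ(T_{m×n}) = 2p. -/
theorem tau_eq_two_mul_p (m n p : ℕ) (hm : 1 < m) (hn : 1 < n)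
    (hgcd : Nat.gcd m n = p) (hp : p.Prime) (hodd : Odd p)
    (h : Nat.gcd (p * m) n = p ^ 2 ∨ Nat.gcd m (p * n) = p ^ 2) :
    tau m n = 2 * p := by
  rcases h with h | h
  · exact tau_eq_of_sq_dvd m n p hm hn hgcd hp (h ▸ Nat.gcd_dvd_right (p*m) n)
  · rw [tau_comm]
    exact tau_eq_of_sq_dvd n m p hn hm (Nat.gcd_comm m n ▸ hgcd) hp
      (h ▸ Nat.gcd_dvd_left m (p*n))
end

section
/- Let m and n be integers greater than 1 and let p = gcd(m,n) be an odd prime. If gcd(p·m, n) = p and gcd(m, p·n) = p, then τ(T_{m×n}) = p + 1. -/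
section Geometry
variable {K : Type*} [Field K]


/-- affine collinearity (det condition) -/
def afCol (P Q R : K × K) : Prop :=
  (Q.1 - P.1) * (R.2 - P.2) = (R.1 - P.1) * (Q.2 - P.2)

lemma afCases {P Q R : K × K} (h : afCol P Q R) :
    (P.1 = Q.1 ∧ P.1 = R.1) ∨
      ∃ w b : K, P.2 = w * P.1 + b ∧ Q.2 = w * Q.1 + b ∧ R.2 = w * R.1 + b := by
  unfold afCol at h
  by_cases hPQ : P.1 = Q.1
  · by_cases hPR : P.1 = R.1
    · exact Or.inl ⟨hPQ, hPR⟩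
    · right
      have hR : R.1 - P.1 ≠ 0 := sub_ne_zero.mpr (fun hh => hPR hh.symm)
      have hQ2 : Q.2 = P.2 := by
        have h0 : (R.1 - P.1) * (Q.2 - P.2) = 0 := by
          rw [← h, ← hPQ]; ring
        rcases mul_eq_zero.mp h0 with h' | h'
        · exact absurd h' hR
        · exact sub_eq_zero.mp h'
      obtain ⟨w, hkey⟩ : ∃ w : K, w * (R.1 - P.1) = R.2 - P.2 := ⟨_, div_mul_cancel₀ _ hR⟩
      refine ⟨w, P.2 - w * P.1, by ring, ?_, by linear_combination -hkey⟩
      rw [hQ2, ← hPQ]; ring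
  · right
    have hQ : Q.1 - P.1 ≠ 0 := sub_ne_zero.mpr (fun hh => hPQ hh.symm)
    obtain ⟨w, hkey⟩ : ∃ w : K, w * (Q.1 - P.1) = Q.2 - P.2 := ⟨_, div_mul_cancel₀ _ hQ⟩
    refine ⟨w, P.2 - w * P.1, by ring, by linear_combination -hkey, ?_⟩
    have h3 : (Q.1 - P.1) * (R.2 - P.2) = (Q.1 - P.1) * (w * (R.1 - P.1)) := by
      linear_combination h - (R.1 - P.1) * hkey
    have h4 := mul_left_cancel₀ hQ h3
    linear_combination h4

lemma conic_secant {d : K} (hd : ¬IsSquare d) (h2 : (2 : K) ≠ 0)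
    {A B C : K × K} (hA : A.1 ^ 2 - d * A.2 ^ 2 = 1) (hB : B.1 ^ 2 - d * B.2 ^ 2 = 1)
    (hC : C.1 ^ 2 - d * C.2 ^ 2 = 1) (hcol : afCol A B C) :
    A = B ∨ A = C ∨ B = C := by
  have hd0 : d ≠ 0 := fun h => hd (h ▸ ⟨0, by ring⟩)
  rcases afCases hcol with ⟨e1, e2⟩ | ⟨w, b, eA, eB, eC⟩
  · -- vertical line
    have hAB : (A.2 - B.2) * (A.2 + B.2) = 0 := by
      have : d * ((A.2 - B.2) * (A.2 + B.2)) = 0 := by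
        linear_combination hB - hA + (A.1 + B.1) * (sub_eq_zero.mpr e1 : A.1 - B.1 = 0)
      exact (mul_eq_zero.mp this).resolve_left hd0
    have hAC : (A.2 - C.2) * (A.2 + C.2) = 0 := by
      have : d * ((A.2 - C.2) * (A.2 + C.2)) = 0 := by
        linear_combination hC - hA + (A.1 + C.1) * (sub_eq_zero.mpr e2 : A.1 - C.1 = 0)
      exact (mul_eq_zero.mp this).resolve_left hd0
    rcases mul_eq_zero.mp hAB with h' | h'
    · left; exact Prod.ext e1 (sub_eq_zero.mp h')
    · rcases mul_eq_zero.mp hAC with h'' | h''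
      · right; left; exact Prod.ext e2 (sub_eq_zero.mp h'')
      · right; right
        refine Prod.ext (e1 ▸ e2.symm ▸ rfl) ?_
        have : B.2 = -A.2 := by linear_combination h'
        have hc : C.2 = -A.2 := by linear_combination h''
        rw [this, hc]
  · -- sloped line
    have he : 1 - d * w ^ 2 ≠ 0 := by
      intro h
      have hw : w ≠ 0 := by
        intro hw0; rw [hw0] at h; simp at h
      apply hd
      refine ⟨w⁻¹, ?_⟩
      field_simp
      linear_combination -h
    have qA : (1 - d * w ^ 2) * A.1 ^ 2 - 2 * d * w * b * A.1 - (d * b ^ 2 + 1) = 0 := by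
      linear_combination hA + d * (A.2 + w * A.1 + b) * eA
    have qB : (1 - d * w ^ 2) * B.1 ^ 2 - 2 * d * w * b * B.1 - (d * b ^ 2 + 1) = 0 := by
      linear_combination hB + d * (B.2 + w * B.1 + b) * eB
    have qC : (1 - d * w ^ 2) * C.1 ^ 2 - 2 * d * w * b * C.1 - (d * b ^ 2 + 1) = 0 := by
      linear_combination hC + d * (C.2 + w * C.1 + b) * eC
    by_cases hAB : A.1 = B.1
    · left; refine Prod.ext hAB ?_; rw [eA, eB, hAB]
    · by_cases hAC : A.1 = C.1
      · right; left; refine Prod.ext hAC ?_; rw [eA, eC, hAC]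
      · by_cases hBC : B.1 = C.1
        · right; right; refine Prod.ext hBC ?_; rw [eB, eC, hBC]
        · exfalso
          have s1 : (1 - d * w ^ 2) * (A.1 + B.1) - 2 * d * w * b = 0 := by
            have h0 : (A.1 - B.1) * ((1 - d * w ^ 2) * (A.1 + B.1) - 2 * d * w * b) = 0 := by
              linear_combination qA - qB
            exact (mul_eq_zero.mp h0).resolve_left (sub_ne_zero.mpr hAB)
          have s2 : (1 - d * w ^ 2) * (A.1 + C.1) - 2 * d * w * b = 0 := by
            have h0 : (A.1 - C.1) * ((1 - d * w ^ 2) * (A.1 + C.1) - 2 * d * w * b) = 0 := by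
              linear_combination qA - qC
            exact (mul_eq_zero.mp h0).resolve_left (sub_ne_zero.mpr hAC)
          have : (1 - d * w ^ 2) * (B.1 - C.1) = 0 := by linear_combination s1 - s2
          rcases mul_eq_zero.mp this with h' | h'
          · exact he h'
          · exact hBC (sub_eq_zero.mp h')

open Classical in
/-- line through `Q` with direction `dir` (`none` = vertical). -/
def onLine (Q : K × K) (dir : Option K) (X : K × K) : Prop :=
  match dir with
  | none => X.1 = Q.1
  | some w => X.2 - Q.2 = w * (X.1 - Q.1)

open Classical in
noncomputable def dirFrom (Q X : K × K) : Option K :=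
  if X.1 = Q.1 then none else some ((X.2 - Q.2) / (X.1 - Q.1))

lemma onLine_self (Q : K × K) (dir : Option K) : onLine Q dir Q := by
  cases dir with
  | none => rfl
  | some w => show Q.2 - Q.2 = w * (Q.1 - Q.1); ring

lemma onLine_dirFrom (Q X : K × K) : onLine Q (dirFrom Q X) X := by
  unfold dirFrom
  split_ifs with h
  · exact h
  · show X.2 - Q.2 = (X.2 - Q.2) / (X.1 - Q.1) * (X.1 - Q.1)
    rw [div_mul_cancel₀]
    exact sub_ne_zero.mpr h

lemma dirFrom_unique {Q X : K × K} (hXQ : X ≠ Q) {dir : Option K}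
    (h : onLine Q dir X) : dir = dirFrom Q X := by
  cases dir with
  | none =>
    unfold dirFrom
    rw [if_pos (show X.1 = Q.1 from h)]
  | some w =>
    have hx : X.1 ≠ Q.1 := by
      intro hx
      apply hXQ
      refine Prod.ext hx ?_
      have : X.2 - Q.2 = 0 := by
        rw [h, hx]; ring
      linear_combination this
    unfold dirFrom
    rw [if_neg hx]
    congr 1
    rw [eq_div_iff (sub_ne_zero.mpr hx)]
    exact h.symm

lemma onLine_trans {Q B X : K × K} {dir : Option K}
    (h1 : onLine Q dir B) (h2 : onLine B dir X) : onLine Q dir X := by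
  cases dir with
  | none => exact h2.trans h1
  | some w =>
    show X.2 - Q.2 = w * (X.1 - Q.1)
    have h1' : B.2 - Q.2 = w * (B.1 - Q.1) := h1
    have h2' : X.2 - B.2 = w * (X.1 - B.1) := h2
    linear_combination h1' + h2'

lemma onLine_afCol {Q X Y Z : K × K} {dir : Option K}
    (hX : onLine Q dir X) (hY : onLine Q dir Y) (hZ : onLine Q dir Z) :
    afCol X Y Z := by
  cases dir with
  | none =>
    show (Y.1 - X.1) * (Z.2 - X.2) = (Z.1 - X.1) * (Y.2 - X.2)
    have hX' : X.1 = Q.1 := hX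
    have hY' : Y.1 = Q.1 := hY
    have hZ' : Z.1 = Q.1 := hZ
    rw [hX', hY', hZ']; ring
  | some w =>
    show (Y.1 - X.1) * (Z.2 - X.2) = (Z.1 - X.1) * (Y.2 - X.2)
    have hX' : X.2 - Q.2 = w * (X.1 - Q.1) := hX
    have hY' : Y.2 - Q.2 = w * (Y.1 - Q.1) := hY
    have hZ' : Z.2 - Q.2 = w * (Z.1 - Q.1) := hZ
    linear_combination (Y.1 - X.1) * (hZ' - hX') - (Z.1 - X.1) * (hY' - hX')

lemma arc_bound {p : ℕ} [hfp : Fact p.Prime] (hodd : Odd p)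
    (Y : Finset (ZMod p × ZMod p)) (hcard : Y.card = p + 2) :
    ∃ A ∈ Y, ∃ B ∈ Y, ∃ C ∈ Y, A ≠ B ∧ A ≠ C ∧ B ≠ C ∧ afCol A B C := by
  classical
  by_contra hcon
  push_neg at hcon
  have hno : ∀ A ∈ Y, ∀ B ∈ Y, ∀ C ∈ Y, A ≠ B → A ≠ C → B ≠ C → ¬ afCol A B C := by
    intro A hA B hB C hC h1 h2 h3 hcol
    exact (hcon A hA B hB C hC h1 h2 h3) hcol
  have hp3 : 3 ≤ p := by
    have h2le := hfp.out.two_le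
    rcases hodd with ⟨t, ht⟩
    omega
  -- Step 1: from every point of Y, every direction is realized by another point of Y
  have step1 : ∀ A ∈ Y, ∀ dir : Option (ZMod p), ∃ B ∈ Y, B ≠ A ∧ onLine A dir B := by
    intro A hA dir
    have hinj : Set.InjOn (dirFrom A) (Y.erase A : Finset (ZMod p × ZMod p)) := by
      intro B hB B' hB' heq
      by_contra hne
      have hBmem := Finset.mem_erase.mp hB
      have hB'mem := Finset.mem_erase.mp hB'
      have hOB : onLine A (dirFrom A B) B := onLine_dirFrom A B
      have hOB' : onLine A (dirFrom A B) B' := heq ▸ onLine_dirFrom A B'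
      have hOA : onLine A (dirFrom A B) A := onLine_self A _
      exact hno A hA B hBmem.2 B' hB'mem.2 (Ne.symm hBmem.1) (Ne.symm hB'mem.1) hne
        (onLine_afCol hOA hOB hOB')
    have himg : (Y.erase A).image (dirFrom A) = Finset.univ := by
      apply Finset.eq_univ_of_card
      rw [Finset.card_image_of_injOn hinj, Finset.card_erase_of_mem hA, hcard,
        Fintype.card_option, ZMod.card]
      omega
    have hdir : dir ∈ (Y.erase A).image (dirFrom A) := himg ▸ Finset.mem_univ dir
    obtain ⟨B, hBmem, hBeq⟩ := Finset.mem_image.mp hdir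
    have hBm := Finset.mem_erase.mp hBmem
    exact ⟨B, hBm.2, hBm.1, hBeq ▸ onLine_dirFrom A B⟩
  -- Step 2: a point outside Y
  obtain ⟨Q, hQ⟩ : ∃ Q : ZMod p × ZMod p, Q ∉ Y := by
    by_contra hall
    push_neg at hall
    have : Y = Finset.univ := Finset.eq_univ_iff_forall.mpr hall
    have hc : Y.card = p * p := by
      rw [this, Finset.card_univ, Fintype.card_prod, ZMod.card]
    rw [hcard] at hc
    nlinarith
  -- Step 3: fiberwise count over directions from Q
  have hsum : Y.card = ∑ d : Option (ZMod p),
      (Y.filter fun X => dirFrom Q X = d).card :=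
    Finset.card_eq_sum_card_fiberwise (fun x _ => Finset.mem_univ _)
  -- Step 4: every fiber is even
  have heven : ∀ d : Option (ZMod p), 2 ∣ (Y.filter fun X => dirFrom Q X = d).card := by
    intro d
    rcases (Y.filter fun X => dirFrom Q X = d).eq_empty_or_nonempty with he | ⟨B, hB⟩
    · rw [he]; simp
    · have hBf := Finset.mem_filter.mp hB
      have hBY := hBf.1
      have hBd : dirFrom Q B = d := hBf.2
      have hBQ : B ≠ Q := fun h => hQ (h ▸ hBY)
      have hQB : onLine Q d B := hBd ▸ onLine_dirFrom Q B
      obtain ⟨C, hCY, hCB, hBC_line⟩ := step1 B hBY d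
      have hQC : onLine Q d C := onLine_trans hQB hBC_line
      have hCQ : C ≠ Q := fun h => hQ (h ▸ hCY)
      have hCd : dirFrom Q C = d := (dirFrom_unique hCQ hQC).symm
      have hfil : (Y.filter fun X => dirFrom Q X = d) = {B, C} := by
        apply Finset.Subset.antisymm
        · intro X hX
          have hXf := Finset.mem_filter.mp hX
          by_contra hXnot
          simp only [Finset.mem_insert, Finset.mem_singleton] at hXnot
          push_neg at hXnot
          have hQX : onLine Q d X := hXf.2 ▸ onLine_dirFrom Q X
          exact hno X hXf.1 B hBY C hCY hXnot.1 hXnot.2 (Ne.symm hCB)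
            (onLine_afCol hQX hQB hQC)
        · intro X hX
          simp only [Finset.mem_insert, Finset.mem_singleton] at hX
          rcases hX with rfl | rfl
          · exact Finset.mem_filter.mpr ⟨hBY, hBd⟩
          · exact Finset.mem_filter.mpr ⟨hCY, hCd⟩
      rw [hfil, Finset.card_pair (Ne.symm hCB)]
  have h2dvd : 2 ∣ Y.card := hsum ▸ Finset.dvd_sum (fun d _ => heven d)
  rw [hcard] at h2dvd
  rcases hodd with ⟨t, ht⟩
  omega

lemma exists_arc {p : ℕ} [hfp : Fact p.Prime] (hodd : Odd p) :
    ∃ S : Finset (ZMod p × ZMod p), S.card = p + 1 ∧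
      ∀ A ∈ S, ∀ B ∈ S, ∀ C ∈ S, afCol A B C → A = B ∨ A = C ∨ B = C := by
  classical
  have hp2 : p ≠ 2 := by
    rcases hodd with ⟨t, ht⟩
    omega
  have h2 : (2 : ZMod p) ≠ 0 := by
    have : ((2 : ℕ) : ZMod p) = 0 ↔ p ∣ 2 := ZMod.natCast_eq_zero_iff 2 p
    intro hc
    have hdvd : p ∣ 2 := this.mp (by push_cast; exact hc)
    exact hp2 ((Nat.prime_dvd_prime_iff_eq hfp.out Nat.prime_two).mp hdvd)
  obtain ⟨d, hd⟩ := FiniteField.exists_nonsquare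
    (show ringChar (ZMod p) ≠ 2 by rw [ZMod.ringChar_zmod_n]; exact hp2)
  have hden : ∀ t : ZMod p, 1 - d * t ^ 2 ≠ 0 := by
    intro t hc
    have ht0 : t ≠ 0 := by
      intro h; rw [h] at hc; simp at hc
    apply hd
    refine ⟨t⁻¹, ?_⟩
    field_simp
    linear_combination -hc
  set Pm : ZMod p → ZMod p × ZMod p :=
    fun t => ((1 + d * t ^ 2) / (1 - d * t ^ 2), 2 * t / (1 - d * t ^ 2)) with hPm
  have hconicPm : ∀ t, (Pm t).1 ^ 2 - d * (Pm t).2 ^ 2 = 1 := by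
    intro t
    show ((1 + d * t ^ 2) / (1 - d * t ^ 2)) ^ 2 - d * (2 * t / (1 - d * t ^ 2)) ^ 2 = 1
    field_simp [hden t]
    ring
  have e1 : ∀ u : ZMod p, (Pm u).1 + 1 = 2 / (1 - d * u ^ 2) := by
    intro u
    show (1 + d * u ^ 2) / (1 - d * u ^ 2) + 1 = 2 / (1 - d * u ^ 2)
    rw [div_add_one (hden u)]
    congr 1
    ring
  have e2 : ∀ u : ZMod p, (Pm u).2 = (2 / (1 - d * u ^ 2)) * u := by
    intro u
    show 2 * u / (1 - d * u ^ 2) = (2 / (1 - d * u ^ 2)) * u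
    ring
  have hinj : Function.Injective Pm := by
    intro t s hts
    have hx : (Pm t).1 = (Pm s).1 := congrArg Prod.fst hts
    have hy : (Pm t).2 = (Pm s).2 := congrArg Prod.snd hts
    have hc : 2 / (1 - d * t ^ 2) = 2 / (1 - d * s ^ 2) := by
      rw [← e1, ← e1, hx]
    rw [e2, e2, ← hc] at hy
    exact mul_left_cancel₀ (div_ne_zero h2 (hden t)) hy
  have hne : ∀ t, Pm t ≠ ((-1 : ZMod p), (0 : ZMod p)) := by
    intro t hc
    have h1 : (Pm t).1 = -1 := by rw [hc]
    have : (1 + d * t ^ 2) / (1 - d * t ^ 2) = -1 := h1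
    rw [div_eq_iff (hden t)] at this
    have h20 : (2 : ZMod p) = 0 := by linear_combination this
    exact h2 h20
  refine ⟨insert ((-1 : ZMod p), (0 : ZMod p)) (Finset.image Pm Finset.univ), ?_, ?_⟩
  · rw [Finset.card_insert_of_notMem, Finset.card_image_of_injective _ hinj,
      Finset.card_univ, ZMod.card]
    intro hc
    obtain ⟨t, _, ht⟩ := Finset.mem_image.mp hc
    exact hne t ht
  · have hconicS : ∀ A ∈ insert ((-1 : ZMod p), (0 : ZMod p)) (Finset.image Pm Finset.univ),
        A.1 ^ 2 - d * A.2 ^ 2 = 1 := by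
      intro A hA
      rcases Finset.mem_insert.mp hA with rfl | hA
      · norm_num
      · obtain ⟨t, _, rfl⟩ := Finset.mem_image.mp hA
        exact hconicPm t
    intro A hA B hB C hC hcol
    exact conic_secant hd h2 (hconicS A hA) (hconicS B hB) (hconicS C hC) hcol

end Geometry

/-- Chinese remainder: common solution to two congruences with coprime moduli. -/
lemma crt2 (a b : ℕ) (hab : Nat.Coprime a b) (x y : ℤ) :
    ∃ k : ℤ, (a : ℤ) ∣ (k - x) ∧ (b : ℤ) ∣ (k - y) := by
  obtain ⟨u, v, huv⟩ := Nat.isCoprime_iff_coprime.mpr hab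
  refine ⟨x * (v * b) + y * (u * a), ⟨u * (y - x), by linear_combination x * huv⟩,
    ⟨v * (x - y), by linear_combination y * huv⟩⟩

lemma zmod_int_eq_iff_dvd (m : ℕ) [NeZero m] (A : ZMod m) (z : ℤ) :
    (z : ZMod m) = A ↔ (m : ℤ) ∣ (z - (A.val : ℤ)) := by
  have hA : (((A.val : ℤ)) : ZMod m) = A := by
    rw [Int.cast_natCast]
    exact ZMod.natCast_rightInverse A
  constructor
  · intro h
    have : (z : ZMod m) = (((A.val : ℤ)) : ZMod m) := by rw [hA]; exact h
    have hmod := (ZMod.intCast_eq_intCast_iff _ _ _).mp this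
    exact (Int.ModEq.dvd hmod.symm)
  · intro h
    rw [← hA]
    exact (ZMod.intCast_eq_intCast_iff _ _ _).mpr (Int.modEq_iff_dvd.mpr (by
      have := dvd_sub (dvd_refl ((m:ℤ))) (dvd_refl _)
      simpa using (dvd_neg.mpr h)))

lemma red_coord_fst (m p : ℕ) [NeZero m] (hpm : p ∣ m) (A : ZMod m) :
    (ZMod.castHom hpm (ZMod p)) A = ((A.val : ℤ) : ZMod p) := by
  conv_lhs => rw [← ZMod.natCast_rightInverse A]
  rw [map_natCast]
  push_cast
  rfl

lemma construct_line {m n p m' n' : ℕ} [Fact p.Prime] [NeZero m] [NeZero n]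
    (hmm : m = p * m') (hnn : n = p * n')
    (hpm' : Nat.Coprime p m') (hpn' : Nat.Coprime p n') (hm'n' : Nat.Coprime m' n')
    (hpm : p ∣ m) (hpn : p ∣ n)
    (A B C : ZMod m × ZMod n)
    (hcol : afCol (torusRed m n p hpm hpn A) (torusRed m n p hpm hpn B)
      (torusRed m n p hpm hpn C)) :
    ∃ L, IsTorusLine m n L ∧ A ∈ L ∧ B ∈ L ∧ C ∈ L := by
  classical
  set ρ := torusRed m n p hpm hpn with hρdef
  have hred1 : ∀ X : ZMod m × ZMod n, (ρ X).1 = (((X.1.val : ℤ)) : ZMod p) :=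
    fun X => red_coord_fst m p hpm X.1
  have hred2 : ∀ X : ZMod m × ZMod n, (ρ X).2 = (((X.2.val : ℤ)) : ZMod p) :=
    fun X => red_coord_fst n p hpn X.2
  have hInt : ∀ x y : ℤ, ((x : ZMod p) = (y : ZMod p)) → (p : ℤ) ∣ y - x :=
    fun x y h => Int.ModEq.dvd ((ZMod.intCast_eq_intCast_iff _ _ _).mp h)
  have hmZ : (m : ℤ) = (p : ℤ) * (m' : ℤ) := by exact_mod_cast congrArg (Nat.cast : ℕ → ℤ) hmm
  have hnZ : (n : ℤ) = (p : ℤ) * (n' : ℤ) := by exact_mod_cast congrArg (Nat.cast : ℕ → ℤ) hnn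
  have hcop_pm' : IsCoprime (p : ℤ) (m' : ℤ) := Nat.isCoprime_iff_coprime.mpr hpm'
  have hcop_pn' : IsCoprime (p : ℤ) (n' : ℤ) := Nat.isCoprime_iff_coprime.mpr hpn'
  have hpdvdmZ : (p : ℤ) ∣ (m : ℤ) := by exact_mod_cast Int.natCast_dvd_natCast.mpr hpm
  rcases afCases hcol with ⟨hv1, hv2⟩ | ⟨w, b, eA, eB, eC⟩
  · -- vertical case
    obtain ⟨U, hU0, hU1⟩ := crt2 p (m' * n') (hpm'.mul_right hpn') 0 1
    rw [sub_zero] at hU0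
    have hUm' : (m' : ℤ) ∣ U - 1 := by
      refine dvd_trans ?_ hU1
      exact_mod_cast Dvd.intro n' rfl
    set xA : ℤ := (A.1.val : ℤ) with hxA
    set S : Set (ℤ × ℤ) := {P : ℤ × ℤ | ∃ k : ℤ, P = (xA + U * k, 0 + 1 * k)} with hS
    have hmem : ∀ X : ZMod m × ZMod n, (p : ℤ) ∣ ((X.1.val : ℤ) - xA) →
        X ∈ torusProj m n '' S := by
      intro X hX
      have hco : Nat.Coprime n m' := by
        rw [hnn]; exact Nat.Coprime.mul hpm' hm'n'.symm
      obtain ⟨k, hk1, hk2⟩ := crt2 n m' hco (X.2.val : ℤ) ((X.1.val : ℤ) - xA)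
      refine ⟨(xA + U * k, 0 + 1 * k), ⟨k, rfl⟩, ?_⟩
      have h1 : ((xA + U * k : ℤ) : ZMod m) = X.1 := by
        rw [zmod_int_eq_iff_dvd, hmZ]
        refine hcop_pm'.mul_dvd ?_ ?_
        · have heq : xA + U * k - (X.1.val : ℤ) = U * k - ((X.1.val : ℤ) - xA) := by ring
          rw [heq]
          exact dvd_sub (hU0.mul_right k) hX
        · have heq : xA + U * k - (X.1.val : ℤ) = (U - 1) * k + (k - ((X.1.val : ℤ) - xA)) := by
            ring
          rw [heq]
          exact dvd_add (hUm'.mul_right k) hk2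
      have h2 : ((0 + 1 * k : ℤ) : ZMod n) = X.2 := by
        rw [zmod_int_eq_iff_dvd]
        have heq : 0 + 1 * k - (X.2.val : ℤ) = k - (X.2.val : ℤ) := by ring
        rw [heq]
        exact hk1
      exact Prod.ext h1 h2
    refine ⟨torusProj m n '' S, ⟨xA, 0, U, 1, by simp, rfl⟩, ?_, ?_, ?_⟩
    · exact hmem A (by rw [hxA]; simp)
    · refine hmem B ?_
      have := hv1
      rw [hred1, hred1] at this
      exact hInt _ _ this
    · refine hmem C ?_
      have := hv2
      rw [hred1, hred1] at this
      exact hInt _ _ this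
  · -- sloped case
    set W : ℤ := (w.val : ℤ) with hW
    set bv : ℤ := (b.val : ℤ) with hbv
    have hwcast : ((W : ℤ) : ZMod p) = w := by
      rw [hW, Int.cast_natCast]
      exact ZMod.natCast_rightInverse w
    have hbcast : ((bv : ℤ) : ZMod p) = b := by
      rw [hbv, Int.cast_natCast]
      exact ZMod.natCast_rightInverse b
    have lineq : ∀ X : ZMod m × ZMod n, (ρ X).2 = w * (ρ X).1 + b →
        (p : ℤ) ∣ (W * (X.1.val : ℤ) + bv - (X.2.val : ℤ)) := by
      intro X hX
      rw [hred1, hred2] at hX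
      have e : ((W * (X.1.val : ℤ) + bv : ℤ) : ZMod p) = (((X.2.val : ℤ)) : ZMod p) := by
        push_cast
        push_cast at hX
        rw [hX]
        push_cast at hwcast hbcast
        rw [hwcast, hbcast]
      exact hInt _ _ e.symm
    obtain ⟨V, hV0, hV1⟩ := crt2 p (m' * n') (hpm'.mul_right hpn') W 1
    have hVn' : (n' : ℤ) ∣ V - 1 := by
      refine dvd_trans ?_ hV1
      exact_mod_cast Dvd.intro_left m' rfl
    set S : Set (ℤ × ℤ) := {P : ℤ × ℤ | ∃ k : ℤ, P = (0 + 1 * k, bv + V * k)} with hS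
    have hmem : ∀ X : ZMod m × ZMod n,
        (p : ℤ) ∣ (W * (X.1.val : ℤ) + bv - (X.2.val : ℤ)) →
        X ∈ torusProj m n '' S := by
      intro X hX
      have hco : Nat.Coprime m n' := by
        rw [hmm]; exact Nat.Coprime.mul hpn' hm'n'
      obtain ⟨k, hk1, hk2⟩ := crt2 m n' hco (X.1.val : ℤ) ((X.2.val : ℤ) - bv)
      refine ⟨(0 + 1 * k, bv + V * k), ⟨k, rfl⟩, ?_⟩
      have h1 : ((0 + 1 * k : ℤ) : ZMod m) = X.1 := by
        rw [zmod_int_eq_iff_dvd]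
        have heq : 0 + 1 * k - (X.1.val : ℤ) = k - (X.1.val : ℤ) := by ring
        rw [heq]
        exact hk1
      have h2 : ((bv + V * k : ℤ) : ZMod n) = X.2 := by
        rw [zmod_int_eq_iff_dvd, hnZ]
        refine hcop_pn'.mul_dvd ?_ ?_
        · have heq : bv + V * k - (X.2.val : ℤ) =
              (V - W) * k + W * (k - (X.1.val : ℤ)) + (W * (X.1.val : ℤ) + bv - (X.2.val : ℤ)) := by
            ring
          rw [heq]
          exact dvd_add (dvd_add (hV0.mul_right k)
            ((dvd_trans hpdvdmZ hk1).mul_left W)) hX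
        · have heq : bv + V * k - (X.2.val : ℤ) =
              (V - 1) * k + (k - ((X.2.val : ℤ) - bv)) := by ring
          rw [heq]
          exact dvd_add (hVn'.mul_right k) hk2
      exact Prod.ext h1 h2
    exact ⟨torusProj m n '' S, ⟨0, bv, 1, V, by simp, rfl⟩, hmem A (lineq A eA),
      hmem B (lineq B eB), hmem C (lineq C eC)⟩


lemma red_proj (m n p : ℕ) (hpm : p ∣ m) (hpn : p ∣ n) (P : ℤ × ℤ) :
    torusRed m n p hpm hpn (torusProj m n P) = torusProj p p P := by
  unfold torusRed torusProj
  exact Prod.ext (map_intCast _ _) (map_intCast _ _)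

def torusSec (m n p : ℕ) : ZMod p × ZMod p → ZMod m × ZMod n :=
  fun P => ((P.1.val : ZMod m), (P.2.val : ZMod n))

lemma torusRed_torusSec (m n p : ℕ) [NeZero p] (hpm : p ∣ m) (hpn : p ∣ n)
    (P : ZMod p × ZMod p) :
    torusRed m n p hpm hpn (torusSec m n p P) = P := by
  unfold torusRed torusSec
  apply Prod.ext
  · show (ZMod.castHom hpm (ZMod p)) ((P.1.val : ZMod m)) = P.1
    rw [map_natCast]
    exact ZMod.natCast_rightInverse P.1
  · show (ZMod.castHom hpn (ZMod p)) ((P.2.val : ZMod n)) = P.2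
    rw [map_natCast]
    exact ZMod.natCast_rightInverse P.2

/-- Theorem 1.2(3b): if p = gcd(m,n) is an odd prime and
gcd(pm,n) = gcd(m,pn) = p, then τ(T_{m×n}) = p + 1. -/
theorem tau_eq_p_add_one (m n p : ℕ) (hm : 1 < m) (hn : 1 < n)
    (hgcd : Nat.gcd m n = p) (hp : p.Prime) (hodd : Odd p)
    (h1 : Nat.gcd (p * m) n = p) (h2 : Nat.gcd m (p * n) = p) :
    tau m n = p + 1 := by
  classical
  haveI hfp : Fact p.Prime := ⟨hp⟩
  haveI : NeZero m := ⟨by omega⟩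
  haveI : NeZero n := ⟨by omega⟩
  haveI : NeZero p := ⟨hp.pos.ne'⟩
  have hpm : p ∣ m := hgcd ▸ Nat.gcd_dvd_left m n
  have hpn : p ∣ n := hgcd ▸ Nat.gcd_dvd_right m n
  set m' := m / p with hm'def
  set n' := n / p with hn'def
  have hmm : m = p * m' := (Nat.mul_div_cancel' hpm).symm
  have hnn : n = p * n' := (Nat.mul_div_cancel' hpn).symm
  have hp0 : 0 < p := hp.pos
  -- extract coprimality conditions
  have g1 : Nat.gcd (p * m') n' = 1 := by
    have e1 : p * Nat.gcd (p * m') n' = p * 1 := by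
      rw [mul_one]
      calc p * Nat.gcd (p * m') n' = Nat.gcd (p * (p * m')) (p * n') :=
            (Nat.gcd_mul_left p _ _).symm
        _ = Nat.gcd (p * m) n := by rw [← hmm, ← hnn]
        _ = p := h1
    exact Nat.eq_of_mul_eq_mul_left hp0 e1
  have g2 : Nat.gcd m' (p * n') = 1 := by
    have e2 : p * Nat.gcd m' (p * n') = p * 1 := by
      rw [mul_one]
      calc p * Nat.gcd m' (p * n') = Nat.gcd (p * m') (p * (p * n')) :=
            (Nat.gcd_mul_left p _ _).symm
        _ = Nat.gcd m (p * n) := by rw [← hmm, ← hnn]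
        _ = p := h2
    exact Nat.eq_of_mul_eq_mul_left hp0 e2
  have hpn' : Nat.Coprime p n' := Nat.Coprime.coprime_dvd_left (dvd_mul_right p m') g1
  have hm'n' : Nat.Coprime m' n' := Nat.Coprime.coprime_dvd_left (dvd_mul_left m' p) g1
  have hpm' : Nat.Coprime p m' :=
    (Nat.Coprime.coprime_dvd_right (dvd_mul_right p n') g2).symm
  set ρ := torusRed m n p hpm hpn with hρdef
  -- Upper bound
  have UB : ∀ X : Set (ZMod m × ZMod n), NoThreeInLine m n X → X.ncard ≤ p + 1 := by
    intro X hX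
    by_contra hgt
    push_neg at hgt
    have hfin : X.Finite := Set.toFinite X
    have key : ∃ A ∈ X, ∃ B ∈ X, ∃ C ∈ X, A ≠ B ∧ A ≠ C ∧ B ≠ C ∧
        afCol (ρ A) (ρ B) (ρ C) := by
      by_cases hinj : Set.InjOn ρ X
      · set F := hfin.toFinset with hF
        have hFcard : F.card = X.ncard := (Set.ncard_eq_toFinset_card X hfin).symm
        have himg : (F.image ρ).card = F.card := by
          apply Finset.card_image_of_injOn
          rw [hF, Set.Finite.coe_toFinset]
          exact hinj
        have hc : p + 2 ≤ (F.image ρ).card := by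
          rw [himg, hFcard]; omega
        obtain ⟨Y, hYsub, hYcard⟩ := Finset.exists_subset_card_eq hc
        obtain ⟨A', hA', B', hB', C', hC', hAB', hAC', hBC', hcol⟩ :=
          arc_bound hodd Y hYcard
        obtain ⟨A, hAF, hAρ⟩ := Finset.mem_image.mp (hYsub hA')
        obtain ⟨B, hBF, hBρ⟩ := Finset.mem_image.mp (hYsub hB')
        obtain ⟨C, hCF, hCρ⟩ := Finset.mem_image.mp (hYsub hC')
        rw [hF, Set.Finite.mem_toFinset] at hAF hBF hCF
        refine ⟨A, hAF, B, hBF, C, hCF, ?_, ?_, ?_, ?_⟩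
        · intro h; exact hAB' (by rw [← hAρ, ← hBρ, h])
        · intro h; exact hAC' (by rw [← hAρ, ← hCρ, h])
        · intro h; exact hBC' (by rw [← hBρ, ← hCρ, h])
        · rw [hAρ, hBρ, hCρ]; exact hcol
      · rw [Set.InjOn] at hinj
        push_neg at hinj
        obtain ⟨A, hA, B, hB, hABρ, hne⟩ := hinj
        have hsub : ¬ X ⊆ {A, B} := by
          intro hsub
          have h2le := Set.ncard_le_ncard hsub (Set.toFinite _)
          have hpair : ({A, B} : Set (ZMod m × ZMod n)).ncard ≤ 2 := by
            simpa using Set.ncard_insert_le A ({B} : Set (ZMod m × ZMod n))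
          have := hp.two_le
          omega
        obtain ⟨C, hC, hCnot⟩ := Set.not_subset.mp hsub
        simp only [Set.mem_insert_iff, Set.mem_singleton_iff, not_or] at hCnot
        refine ⟨A, hA, B, hB, C, hC, hne, Ne.symm hCnot.1, Ne.symm hCnot.2, ?_⟩
        show ((ρ B).1 - (ρ A).1) * ((ρ C).2 - (ρ A).2) =
          ((ρ C).1 - (ρ A).1) * ((ρ B).2 - (ρ A).2)
        rw [hABρ]; ring
    obtain ⟨A, hA, B, hB, C, hC, hAB, hAC, hBC, hcol⟩ := key
    obtain ⟨L, hL, hAL, hBL, hCL⟩ :=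
      construct_line hmm hnn hpm' hpn' hm'n' hpm hpn A B C hcol
    rcases hX L hL A hA B hB C hC hAL hBL hCL with h | h | h
    · exact hAB h
    · exact hAC h
    · exact hBC h
  -- Lower bound: a (p+1)-point set with no three on a line
  obtain ⟨S, hScard, hSarc⟩ := exists_arc (p := p) hodd
  have hsec_inj : Function.Injective (torusSec m n p) :=
    Function.LeftInverse.injective (torusRed_torusSec m n p hpm hpn)
  set Xlow : Set (ZMod m × ZMod n) := (torusSec m n p) '' ↑S with hXlow
  have hXcard : Xlow.ncard = p + 1 := by
    rw [hXlow, Set.ncard_image_of_injective _ hsec_inj, Set.ncard_coe_finset, hScard]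
  have hXno : NoThreeInLine m n Xlow := by
    intro L hL A hA B hB C hC hAL hBL hCL
    obtain ⟨a, b, u, v, hguv, rfl⟩ := hL
    obtain ⟨PA, hPAS, rfl⟩ := hA
    obtain ⟨PB, hPBS, rfl⟩ := hB
    obtain ⟨PC, hPCS, rfl⟩ := hC
    obtain ⟨QA, ⟨kA, rfl⟩, hQA⟩ := hAL
    obtain ⟨QB, ⟨kB, rfl⟩, hQB⟩ := hBL
    obtain ⟨QC, ⟨kC, rfl⟩, hQC⟩ := hCL
    have hrA : PA = torusProj p p (a + u * kA, b + v * kA) := by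
      rw [← red_proj m n p hpm hpn, hQA, torusRed_torusSec]
    have hrB : PB = torusProj p p (a + u * kB, b + v * kB) := by
      rw [← red_proj m n p hpm hpn, hQB, torusRed_torusSec]
    have hrC : PC = torusProj p p (a + u * kC, b + v * kC) := by
      rw [← red_proj m n p hpm hpn, hQC, torusRed_torusSec]
    have hcol : afCol PA PB PC := by
      rw [hrA, hrB, hrC]
      show ((((a + u * kB : ℤ)) : ZMod p) - (((a + u * kA : ℤ)) : ZMod p)) *
          ((((b + v * kC : ℤ)) : ZMod p) - (((b + v * kA : ℤ)) : ZMod p)) =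
        ((((a + u * kC : ℤ)) : ZMod p) - (((a + u * kA : ℤ)) : ZMod p)) *
          ((((b + v * kB : ℤ)) : ZMod p) - (((b + v * kA : ℤ)) : ZMod p))
      push_cast
      ring
    rcases hSarc PA hPAS PB hPBS PC hPCS hcol with h | h | h
    · exact Or.inl (by rw [h])
    · exact Or.inr (Or.inl (by rw [h]))
    · exact Or.inr (Or.inr (by rw [h]))
  -- conclude
  have hmemT : p + 1 ∈ {k : ℕ | ∃ X : Set (ZMod m × ZMod n),
      NoThreeInLine m n X ∧ X.ncard = k} := ⟨Xlow, hXno, hXcard⟩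
  have hub : ∀ k ∈ {k : ℕ | ∃ X : Set (ZMod m × ZMod n),
      NoThreeInLine m n X ∧ X.ncard = k}, k ≤ p + 1 := by
    rintro k ⟨X, hX, rfl⟩
    exact UB X hX
  show sSup _ = p + 1
  exact le_antisymm (csSup_le ⟨p + 1, hmemT⟩ hub)
    (le_csSup ⟨p + 1, fun k hk => hub k hk⟩ hmemT)
end

section
/- Let m and n be integers greater than 1, and let A = (a_x, a_y), B = (b_x, b_y), C = (c_x, c_y) be points of ℤ×ℤ such that the three points π_{m,n}(A), π_{m,n}(B), π_{m,n}(C) lie on a common line on T_{m×n}. Then the determinant D(A,B,C) of the 3×3 matrix with rows (1,1,1), (a_x, b_x, c_x), (a_y, b_y, c_y) is congruent to 0 modulo gcd(m,n). -/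
/-- Lemma 3.2: if π(A), π(B), π(C) lie on a common line on T_{m×n},
then D(A,B,C) ≡ 0 (mod gcd(m,n)). -/
theorem det_zero_mod_gcd_of_collinear (m n : ℕ) (hm : 1 < m) (hn : 1 < n)
    (A B C : ℤ × ℤ)
    (h : ∃ L : Set (ZMod m × ZMod n), IsTorusLine m n L ∧
      torusProj m n A ∈ L ∧ torusProj m n B ∈ L ∧ torusProj m n C ∈ L) :
    (Nat.gcd m n : ℤ) ∣ detD A B C := by
  classical
  obtain ⟨L, ⟨a, b, u, v, huv, hL⟩, hA, hB, hC⟩ := h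
  set g : ℕ := Nat.gcd m n with hg
  have hgm : (g : ℤ) ∣ (m : ℤ) := Int.natCast_dvd_natCast.mpr (Nat.gcd_dvd_left m n)
  have hgn : (g : ℤ) ∣ (n : ℤ) := Int.natCast_dvd_natCast.mpr (Nat.gcd_dvd_right m n)
  have key : ∀ P : ℤ × ℤ, torusProj m n P ∈ L →
      ∃ k : ℤ, ((P.1 : ZMod g) = ((a + u * k : ℤ) : ZMod g) ∧
                (P.2 : ZMod g) = ((b + v * k : ℤ) : ZMod g)) := by
    intro P hP
    rw [hL] at hP
    obtain ⟨Q, ⟨k, hk⟩, hQ⟩ := hP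
    refine ⟨k, ?_, ?_⟩
    · have h1 : ((a + u * k : ℤ) : ZMod m) = (P.1 : ZMod m) := by
        have := congrArg Prod.fst hQ
        simpa [torusProj, hk] using this
      have h2 : (a + u * k) ≡ P.1 [ZMOD m] := (ZMod.intCast_eq_intCast_iff _ _ _).mp h1
      have h3 : (a + u * k) ≡ P.1 [ZMOD (g : ℤ)] := h2.of_dvd hgm
      exact ((ZMod.intCast_eq_intCast_iff _ _ _).mpr h3).symm
    · have h1 : ((b + v * k : ℤ) : ZMod n) = (P.2 : ZMod n) := by
        have := congrArg Prod.snd hQ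
        simpa [torusProj, hk] using this
      have h2 : (b + v * k) ≡ P.2 [ZMOD n] := (ZMod.intCast_eq_intCast_iff _ _ _).mp h1
      have h3 : (b + v * k) ≡ P.2 [ZMOD (g : ℤ)] := h2.of_dvd hgn
      exact ((ZMod.intCast_eq_intCast_iff _ _ _).mpr h3).symm
  obtain ⟨k₁, hA1, hA2⟩ := key A hA
  obtain ⟨k₂, hB1, hB2⟩ := key B hB
  obtain ⟨k₃, hC1, hC2⟩ := key C hC
  have hdet : detD A B C = (B.1 - A.1) * (C.2 - A.2) - (C.1 - A.1) * (B.2 - A.2) := by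
    simp [detD, Matrix.det_fin_three]; ring
  have : ((detD A B C : ℤ) : ZMod g) = 0 := by
    rw [hdet]
    push_cast
    push_cast at hA1 hA2 hB1 hB2 hC1 hC2
    rw [hA1, hA2, hB1, hB2, hC1, hC2]
    ring
  exact (ZMod.intCast_zmod_eq_zero_iff_dvd _ _).mp this
end

section
/- Let m and n be integers greater than 1 with gcd(m,n) = 2. The four-point set X = {(0,0), (0,1), (1,0), (1,1)} ⊆ T_{m×n} satisfies the no-three-in-line condition. -/
/-- For gcd(m,n) = 2, the set {(0,0),(0,1),(1,0),(1,1)} ⊆ T_{m×n}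
satisfies the no-three-in-line condition. -/
theorem four_points_no_three_in_line (m n : ℕ) (hm : 1 < m) (hn : 1 < n)
    (h : Nat.gcd m n = 2) :
    NoThreeInLine m n
      {((0 : ZMod m), (0 : ZMod n)), ((0 : ZMod m), (1 : ZMod n)),
       ((1 : ZMod m), (0 : ZMod n)), ((1 : ZMod m), (1 : ZMod n))} := by
  have h2m : (2:ℕ) ∣ m := h ▸ Nat.gcd_dvd_left m n
  have h2n : (2:ℕ) ∣ n := h ▸ Nat.gcd_dvd_right m n
  intro L hL A hA B hB C hC hAL hBL hCL
  obtain ⟨a, b, u, v, hguv, rfl⟩ := hL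
  obtain ⟨PA, ⟨kA, rfl⟩, hPA⟩ := hAL
  obtain ⟨PB, ⟨kB, rfl⟩, hPB⟩ := hBL
  obtain ⟨PC, ⟨kC, rfl⟩, hPC⟩ := hCL
  set r1 := ZMod.castHom h2m (ZMod 2) with hr1
  set r2 := ZMod.castHom h2n (ZMod 2) with hr2
  have key : ∀ (k : ℤ) (Q : ZMod m × ZMod n),
      torusProj m n (a + u*k, b + v*k) = Q →
      r1 Q.1 = (a : ZMod 2) + u * k ∧ r2 Q.2 = (b : ZMod 2) + v * k := by
    intro k Q hQ
    subst hQ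
    constructor
    · show r1 ((a + u*k : ℤ) : ZMod m) = _
      rw [map_intCast]; push_cast; ring
    · show r2 ((b + v*k : ℤ) : ZMod n) = _
      rw [map_intCast]; push_cast; ring
  have inj : ∀ P Q : ZMod m × ZMod n,
      P ∈ ({((0 : ZMod m), (0 : ZMod n)), ((0 : ZMod m), (1 : ZMod n)),
       ((1 : ZMod m), (0 : ZMod n)), ((1 : ZMod m), (1 : ZMod n))} : Set _) →
      Q ∈ ({((0 : ZMod m), (0 : ZMod n)), ((0 : ZMod m), (1 : ZMod n)),
       ((1 : ZMod m), (0 : ZMod n)), ((1 : ZMod m), (1 : ZMod n))} : Set _) →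
      r1 P.1 = r1 Q.1 → r2 P.2 = r2 Q.2 → P = Q := by
    intro P Q hP hQ h1 h2
    simp only [Set.mem_insert_iff, Set.mem_singleton_iff] at hP hQ
    rcases hP with rfl|rfl|rfl|rfl <;> rcases hQ with rfl|rfl|rfl|rfl <;>
      simp_all <;> exact absurd h1 (by simp) <;> exact absurd h2 (by simp)
  have tri : ((kA : ZMod 2) = kB) ∨ ((kA : ZMod 2) = kC) ∨ ((kB : ZMod 2) = kC) := by
    have : ∀ x y z : ZMod 2, x = y ∨ x = z ∨ y = z := by decide
    exact this _ _ _
  obtain ⟨hA1, hA2⟩ := key kA A hPA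
  obtain ⟨hB1, hB2⟩ := key kB B hPB
  obtain ⟨hC1, hC2⟩ := key kC C hPC
  rcases tri with hk | hk | hk
  · left; exact inj A B hA hB (by rw [hA1, hB1, hk]) (by rw [hA2, hB2, hk])
  · right; left; exact inj A C hA hC (by rw [hA1, hC1, hk]) (by rw [hA2, hC2, hk])
  · right; right; exact inj B C hB hC (by rw [hB1, hC1, hk]) (by rw [hB2, hC2, hk])
end

section
/- Let p be an odd prime and let m = p·k and n = p²·l for positive integers k, l, so that m, n > 1. Then the set X ∪ Y ⊆ T_{m×n}, where X = {π_{m,n}(i, i²·p) : i = 0, 1, …, p−1} and Y = {π_{m,n}(i, i²·p + 1) : i = 0, 1, …, p−1}, consists of 2p points and satisfies the no-three-in-line condition. -/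
private lemma dvd_bounded_eq {P a b : ℤ} (ha1 : 0 ≤ a) (ha2 : a < P)
    (hb1 : 0 ≤ b) (hb2 : b < P) (h : P ∣ b - a) : a = b := by
  have h0 : b - a = 0 := Int.eq_zero_of_abs_lt_dvd h (by rw [abs_lt]; omega)
  omega

/-- Core arithmetic lemma: three points of the configuration on a common line
force two of them to coincide. -/
private lemma core_coll (p m n : ℕ) (hp : p.Prime)
    (hpm : (p:ℤ) ∣ (m:ℤ)) (hpn : ((p:ℤ))^2 ∣ (n:ℤ))
    (u v : ℤ) (a b : ℤ)
    (i1 i2 i3 e1 e2 e3 : ℤ)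
    (he1 : e1 = 0 ∨ e1 = 1) (he2 : e2 = 0 ∨ e2 = 1) (he3 : e3 = 0 ∨ e3 = 1)
    (hi1 : 0 ≤ i1) (hi1' : i1 < p) (hi2 : 0 ≤ i2) (hi2' : i2 < p)
    (hi3 : 0 ≤ i3) (hi3' : i3 < p)
    (k1 k2 k3 : ℤ)
    (hx1 : (m:ℤ) ∣ (a + u*k1) - i1) (hy1 : (n:ℤ) ∣ (b + v*k1) - (i1^2*p + e1))
    (hx2 : (m:ℤ) ∣ (a + u*k2) - i2) (hy2 : (n:ℤ) ∣ (b + v*k2) - (i2^2*p + e2))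
    (hx3 : (m:ℤ) ∣ (a + u*k3) - i3) (hy3 : (n:ℤ) ∣ (b + v*k3) - (i3^2*p + e3)) :
    (i1 = i2 ∧ e1 = e2) ∨ (i1 = i3 ∧ e1 = e3) ∨ (i2 = i3 ∧ e2 = e3) := by
  set P : ℤ := (p:ℤ) with hP
  have hP0 : (0:ℤ) < P := Int.natCast_pos.mpr hp.pos
  have hPprime : Prime P := Nat.prime_iff_prime_int.mp hp
  -- x-congruences mod P
  have hX2 : P ∣ u*(k2-k1) - (i2 - i1) := by
    have h := hpm.trans (dvd_sub hx2 hx1)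
    have e : (a + u*k2 - i2) - ((a + u*k1) - i1) = u*(k2-k1) - (i2-i1) := by ring
    rwa [e] at h
  have hX3 : P ∣ u*(k3-k1) - (i3 - i1) := by
    have h := hpm.trans (dvd_sub hx3 hx1)
    have e : (a + u*k3 - i3) - ((a + u*k1) - i1) = u*(k3-k1) - (i3-i1) := by ring
    rwa [e] at h
  -- y-congruences mod P²
  have hY2 : P^2 ∣ v*(k2-k1) - ((i2^2 - i1^2)*P + (e2 - e1)) := by
    have h := hpn.trans (dvd_sub hy2 hy1)
    have e : (b + v*k2 - (i2^2*P + e2)) - ((b + v*k1) - (i1^2*P + e1))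
        = v*(k2-k1) - ((i2^2 - i1^2)*P + (e2 - e1)) := by ring
    rwa [e] at h
  have hY3 : P^2 ∣ v*(k3-k1) - ((i3^2 - i1^2)*P + (e3 - e1)) := by
    have h := hpn.trans (dvd_sub hy3 hy1)
    have e : (b + v*k3 - (i3^2*P + e3)) - ((b + v*k1) - (i1^2*P + e1))
        = v*(k3-k1) - ((i3^2 - i1^2)*P + (e3 - e1)) := by ring
    rwa [e] at h
  have hPP : P ∣ P^2 := ⟨P, by ring⟩
  -- y-congruences mod P
  have hy2P : P ∣ v*(k2-k1) - (e2 - e1) := by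
    have h := dvd_add (hPP.trans hY2) (⟨i2^2-i1^2, by ring⟩ : P ∣ (i2^2-i1^2)*P)
    have e : (v*(k2-k1) - ((i2^2 - i1^2)*P + (e2 - e1))) + (i2^2-i1^2)*P
        = v*(k2-k1) - (e2 - e1) := by ring
    rwa [e] at h
  have hy3P : P ∣ v*(k3-k1) - (e3 - e1) := by
    have h := dvd_add (hPP.trans hY3) (⟨i3^2-i1^2, by ring⟩ : P ∣ (i3^2-i1^2)*P)
    have e : (v*(k3-k1) - ((i3^2 - i1^2)*P + (e3 - e1))) + (i3^2-i1^2)*P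
        = v*(k3-k1) - (e3 - e1) := by ring
    rwa [e] at h
  -- the key mod-P relation
  have hkey : P ∣ (i2-i1)*(e3-e1) - (i3-i1)*(e2-e1) := by
    have h1 : P ∣ ((i2-i1)*(e3-e1) - (i3-i1)*(e2-e1))
        - (u*(k2-k1)*(v*(k3-k1)) - u*(k3-k1)*(v*(k2-k1))) := by
      have e : ((i2-i1)*(e3-e1) - (i3-i1)*(e2-e1))
          - (u*(k2-k1)*(v*(k3-k1)) - u*(k3-k1)*(v*(k2-k1)))
          = (-(e3-e1)) * (u*(k2-k1) - (i2-i1)) + (e2-e1) * (u*(k3-k1) - (i3-i1))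
            + (-(u*(k2-k1))) * (v*(k3-k1) - (e3-e1))
            + (u*(k3-k1)) * (v*(k2-k1) - (e2-e1)) := by ring
      rw [e]
      exact dvd_add (dvd_add (dvd_add (Dvd.dvd.mul_left hX2 _) (Dvd.dvd.mul_left hX3 _))
        (Dvd.dvd.mul_left hy3P _)) (Dvd.dvd.mul_left hy2P _)
    have e0 : u*(k2-k1)*(v*(k3-k1)) - u*(k3-k1)*(v*(k2-k1)) = 0 := by ring
    rw [e0, sub_zero] at h1
    exact h1
  -- the all-equal-e case
  have hcube : e2 - e1 = 0 → e3 - e1 = 0 → (i1 = i2 ∨ i1 = i3 ∨ i2 = i3) := by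
    intro h2 h3
    have hq2' : P ∣ v*(k2-k1) := by
      have := hy2P; rw [h2, sub_zero] at this; exact this
    have hq3' : P ∣ v*(k3-k1) := by
      have := hy3P; rw [h3, sub_zero] at this; exact this
    obtain ⟨q2, hq2⟩ := hq2'
    obtain ⟨q3, hq3⟩ := hq3'
    have hr2 : P ∣ q2 - (i2^2 - i1^2) := by
      have h := hY2
      rw [h2, add_zero, hq2] at h
      have e : P^2 = P*P := by ring
      have e2' : P*q2 - (i2^2-i1^2)*P = P*(q2 - (i2^2-i1^2)) := by ring
      rw [e, e2'] at h
      exact (mul_dvd_mul_iff_left (ne_of_gt hP0)).mp h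
    have hr3 : P ∣ q3 - (i3^2 - i1^2) := by
      have h := hY3
      rw [h3, add_zero, hq3] at h
      have e : P^2 = P*P := by ring
      have e2' : P*q3 - (i3^2-i1^2)*P = P*(q3 - (i3^2-i1^2)) := by ring
      rw [e, e2'] at h
      exact (mul_dvd_mul_iff_left (ne_of_gt hP0)).mp h
    have hId : P * (u*(k2-k1)*q3 - u*(k3-k1)*q2) = 0 := by
      have : P * (u*(k2-k1)*q3 - u*(k3-k1)*q2)
          = u*(k2-k1)*(P*q3) - u*(k3-k1)*(P*q2) := by ring
      rw [this, ← hq2, ← hq3]; ring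
    have hprod : u*(k2-k1)*q3 - u*(k3-k1)*q2 = 0 := by
      rcases mul_eq_zero.mp hId with h | h
      · exact absurd h (ne_of_gt hP0)
      · exact h
    have hdvd : P ∣ (i2-i1)*(i3-i1)*(i3-i2) := by
      have e : (i2-i1)*(i3-i1)*(i3-i2)
          = (-(i3^2-i1^2)) * (u*(k2-k1) - (i2-i1)) + (i2^2-i1^2) * (u*(k3-k1) - (i3-i1))
            + (-(u*(k2-k1))) * (q3 - (i3^2-i1^2)) + (u*(k3-k1)) * (q2 - (i2^2-i1^2))
            + (u*(k2-k1)*q3 - u*(k3-k1)*q2) := by ring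
      rw [e, hprod, add_zero]
      exact dvd_add (dvd_add (dvd_add (Dvd.dvd.mul_left hX2 _) (Dvd.dvd.mul_left hX3 _))
        (Dvd.dvd.mul_left hr3 _)) (Dvd.dvd.mul_left hr2 _)
    rcases (hPprime.dvd_mul.mp hdvd) with h | h
    · rcases (hPprime.dvd_mul.mp h) with h' | h'
      · exact Or.inl (dvd_bounded_eq hi1 hi1' hi2 hi2' h')
      · exact Or.inr (Or.inl (dvd_bounded_eq hi1 hi1' hi3 hi3' h'))
    · exact Or.inr (Or.inr (dvd_bounded_eq hi2 hi2' hi3 hi3' h))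
  -- case split on the e's
  rcases he1 with rfl | rfl <;> rcases he2 with rfl | rfl <;> rcases he3 with rfl | rfl
  -- (0,0,0): hard case below; (0,0,1); (0,1,0); (0,1,1); (1,0,0); (1,0,1); (1,1,0); (1,1,1)
  case _ => -- 0,0,0
    rcases hcube (by norm_num) (by norm_num) with h | h | h
    · exact Or.inl ⟨h, rfl⟩
    · exact Or.inr (Or.inl ⟨h, rfl⟩)
    · exact Or.inr (Or.inr ⟨h, rfl⟩)
  case _ => -- 0,0,1
    left
    refine ⟨dvd_bounded_eq hi1 hi1' hi2 hi2' ?_, rfl⟩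
    have e : (i2-i1)*(1-0) - (i3-i1)*(0-0) = i2 - i1 := by ring
    rwa [e] at hkey
  case _ => -- 0,1,0
    right; left
    refine ⟨dvd_bounded_eq hi1 hi1' hi3 hi3' ?_, rfl⟩
    have e : (i2-i1)*(0-0) - (i3-i1)*(1-0) = -(i3 - i1) := by ring
    rw [e] at hkey
    exact (dvd_neg.mp hkey)
  case _ => -- 0,1,1
    right; right
    refine ⟨dvd_bounded_eq hi2 hi2' hi3 hi3' ?_, rfl⟩
    have e : (i2-i1)*(1-0) - (i3-i1)*(1-0) = -(i3 - i2) := by ring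
    rw [e] at hkey
    exact (dvd_neg.mp hkey)
  case _ => -- 1,0,0
    right; right
    refine ⟨dvd_bounded_eq hi2 hi2' hi3 hi3' ?_, rfl⟩
    have e : (i2-i1)*(0-1) - (i3-i1)*(0-1) = i3 - i2 := by ring
    rwa [e] at hkey
  case _ => -- 1,0,1
    right; left
    refine ⟨dvd_bounded_eq hi1 hi1' hi3 hi3' ?_, rfl⟩
    have e : (i2-i1)*(1-1) - (i3-i1)*(0-1) = i3 - i1 := by ring
    rwa [e] at hkey
  case _ => -- 1,1,0
    left
    refine ⟨dvd_bounded_eq hi1 hi1' hi2 hi2' ?_, rfl⟩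
    have e : (i2-i1)*(0-1) - (i3-i1)*(1-1) = -(i2 - i1) := by ring
    rw [e] at hkey
    exact (dvd_neg.mp hkey)
  case _ => -- 1,1,1
    rcases hcube (by norm_num) (by norm_num) with h | h | h
    · exact Or.inl ⟨h, rfl⟩
    · exact Or.inr (Or.inl ⟨h, rfl⟩)
    · exact Or.inr (Or.inr ⟨h, rfl⟩)

/-- The 2p-point configuration X ∪ Y on T_{pk × p²l} (p an odd prime)
has exactly 2p points and satisfies the no-three-in-line condition. -/
theorem parabola_configuration (p k l m n : ℕ) (hp : p.Prime) (hodd : Odd p)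
    (hk : 0 < k) (hl : 0 < l) (hm : m = p * k) (hn : n = p ^ 2 * l) :
    ((fun i : ℤ => torusProj m n (i, i ^ 2 * (p : ℤ))) '' Set.Ico 0 (p : ℤ) ∪
     (fun i : ℤ => torusProj m n (i, i ^ 2 * (p : ℤ) + 1)) '' Set.Ico 0 (p : ℤ)).ncard
      = 2 * p ∧
    NoThreeInLine m n
      ((fun i : ℤ => torusProj m n (i, i ^ 2 * (p : ℤ))) '' Set.Ico 0 (p : ℤ) ∪
       (fun i : ℤ => torusProj m n (i, i ^ 2 * (p : ℤ) + 1)) '' Set.Ico 0 (p : ℤ)) := by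
  have hp2 : 2 ≤ p := hp.two_le
  have hpm : (p:ℤ) ∣ (m:ℤ) := Int.natCast_dvd_natCast.mpr ⟨k, hm⟩
  have hpn : ((p:ℤ))^2 ∣ (n:ℤ) := by
    have h : p^2 ∣ n := ⟨l, hn⟩
    exact_mod_cast Int.natCast_dvd_natCast.mpr h
  have hpmle : (p:ℤ) ≤ (m:ℤ) := by
    have : p ≤ m := by subst hm; nlinarith
    exact_mod_cast this
  have hn4 : 4 ≤ n := by subst hn; nlinarith
  -- first components determine the index
  have hproj : ∀ x y : ℤ, 0 ≤ x → x < p → 0 ≤ y → y < p →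
      ((x : ZMod m) = (y : ZMod m)) → x = y := by
    intro x y hx hx' hy hy' h
    have h2 : (m:ℤ) ∣ y - x := ((ZMod.intCast_eq_intCast_iff _ _ _).mp h).dvd
    exact dvd_bounded_eq hx (lt_of_lt_of_le hx' hpmle) hy (lt_of_lt_of_le hy' hpmle) h2
  constructor
  · -- cardinality
    have hinj1 : Set.InjOn (fun i : ℤ => torusProj m n (i, i ^ 2 * (p : ℤ)))
        (Set.Ico 0 (p:ℤ)) := by
      intro x hx y hy h
      exact hproj x y hx.1 hx.2 hy.1 hy.2 (congrArg Prod.fst h)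
    have hinj2 : Set.InjOn (fun i : ℤ => torusProj m n (i, i ^ 2 * (p : ℤ) + 1))
        (Set.Ico 0 (p:ℤ)) := by
      intro x hx y hy h
      exact hproj x y hx.1 hx.2 hy.1 hy.2 (congrArg Prod.fst h)
    have hIco : (Set.Ico (0:ℤ) (p:ℤ)).ncard = p := by
      rw [← Finset.coe_Ico, Set.ncard_coe_finset, Int.card_Ico]
      simp
    have hfin : (Set.Ico (0:ℤ) (p:ℤ)).Finite := Set.finite_Ico _ _
    have hdisj : Disjoint
        ((fun i : ℤ => torusProj m n (i, i ^ 2 * (p : ℤ))) '' Set.Ico 0 (p : ℤ))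
        ((fun i : ℤ => torusProj m n (i, i ^ 2 * (p : ℤ) + 1)) '' Set.Ico 0 (p : ℤ)) := by
      rw [Set.disjoint_left]
      rintro A ⟨x, hx, rfl⟩ ⟨y, hy, hyA⟩
      have h1 : (y : ZMod m) = (x : ZMod m) := congrArg Prod.fst hyA
      have hxy : y = x := hproj y x hy.1 hy.2 hx.1 hx.2 h1
      subst hxy
      have h2 : ((y^2*(p:ℤ) + 1 : ℤ) : ZMod n) = ((y^2*(p:ℤ) : ℤ) : ZMod n) := by
        have := congrArg Prod.snd hyA
        simpa [torusProj] using this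
      have h3 : (n:ℤ) ∣ (y^2*(p:ℤ)) - (y^2*(p:ℤ) + 1) :=
        ((ZMod.intCast_eq_intCast_iff _ _ _).mp h2).dvd
      have h4 : (n:ℤ) ∣ 1 := by
        have e : (y^2*(p:ℤ)) - (y^2*(p:ℤ) + 1) = -1 := by ring
        rw [e] at h3
        exact (dvd_neg.mp h3)
      have := Int.le_of_dvd one_pos h4
      have : (4:ℤ) ≤ (n:ℤ) := by exact_mod_cast hn4
      omega
    rw [Set.ncard_union_eq hdisj (hfin.image _) (hfin.image _),
      Set.ncard_image_of_injOn hinj1, Set.ncard_image_of_injOn hinj2, hIco]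
    ring
  · -- no three in line
    intro L hL A hA B hB C hC hAL hBL hCL
    obtain ⟨a, b, u, v, hguv, rfl⟩ := hL
    have ext : ∀ A, A ∈ ((fun i : ℤ => torusProj m n (i, i ^ 2 * (p : ℤ))) '' Set.Ico 0 (p : ℤ) ∪
        (fun i : ℤ => torusProj m n (i, i ^ 2 * (p : ℤ) + 1)) '' Set.Ico 0 (p : ℤ)) →
        ∃ i e : ℤ, 0 ≤ i ∧ i < p ∧ (e = 0 ∨ e = 1) ∧ A = torusProj m n (i, i^2*(p:ℤ) + e) := by
      rintro A (⟨i, hi, rfl⟩ | ⟨i, hi, rfl⟩)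
      · exact ⟨i, 0, hi.1, hi.2, Or.inl rfl, by rw [add_zero]⟩
      · exact ⟨i, 1, hi.1, hi.2, Or.inr rfl, rfl⟩
    obtain ⟨i1, e1, hi1, hi1', he1, hAeq⟩ := ext A hA
    obtain ⟨i2, e2, hi2, hi2', he2, hBeq⟩ := ext B hB
    obtain ⟨i3, e3, hi3, hi3', he3, hCeq⟩ := ext C hC
    have lmem : ∀ A : ZMod m × ZMod n, ∀ i e : ℤ,
        A ∈ torusProj m n '' {P : ℤ × ℤ | ∃ k : ℤ, P = (a + u * k, b + v * k)} →
        A = torusProj m n (i, i^2*(p:ℤ) + e) →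
        ∃ t : ℤ, ((m:ℤ) ∣ (a + u*t) - i) ∧ ((n:ℤ) ∣ (b + v*t) - (i^2*(p:ℤ) + e)) := by
      rintro A i e ⟨Pt, ⟨t, rfl⟩, hPA⟩ hAe
      rw [hAe] at hPA
      refine ⟨t, ?_, ?_⟩
      · have h1 : ((a + u*t : ℤ) : ZMod m) = ((i : ℤ) : ZMod m) := congrArg Prod.fst hPA
        exact ((ZMod.intCast_eq_intCast_iff _ _ _).mp h1).symm.dvd
      · have h1 : ((b + v*t : ℤ) : ZMod n) = ((i^2*(p:ℤ) + e : ℤ) : ZMod n) :=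
          congrArg Prod.snd hPA
        exact ((ZMod.intCast_eq_intCast_iff _ _ _).mp h1).symm.dvd
    obtain ⟨k1, hx1, hy1⟩ := lmem A i1 e1 hAL hAeq
    obtain ⟨k2, hx2, hy2⟩ := lmem B i2 e2 hBL hBeq
    obtain ⟨k3, hx3, hy3⟩ := lmem C i3 e3 hCL hCeq
    rcases core_coll p m n hp hpm hpn u v a b i1 i2 i3 e1 e2 e3 he1 he2 he3
      hi1 hi1' hi2 hi2' hi3 hi3' k1 k2 k3 hx1 hy1 hx2 hy2 hx3 hy3 with
      ⟨h1, h2⟩ | ⟨h1, h2⟩ | ⟨h1, h2⟩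
    · exact Or.inl (by rw [hAeq, hBeq, h1, h2])
    · exact Or.inr (Or.inl (by rw [hAeq, hCeq, h1, h2]))
    · exact Or.inr (Or.inr (by rw [hBeq, hCeq, h1, h2]))
end

section
/- Let m and n be integers greater than 1 and set p = gcd(m,n), with p > 1. Then τ(T_{m×n}) ≥ τ(T_{p×p}). -/
/-- Lemma 4.1(1): τ(T_{m×n}) ≥ τ(T_{p×p}) where p = gcd(m,n) > 1. -/
theorem tau_ge_tau_gcd (m n p : ℕ) (hm : 1 < m) (hn : 1 < n)
    (hgcd : Nat.gcd m n = p) (hp1 : 1 < p) :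
    tau p p ≤ tau m n := by
  have hpm : p ∣ m := hgcd ▸ Nat.gcd_dvd_left m n
  have hpn : p ∣ n := hgcd ▸ Nat.gcd_dvd_right m n
  haveI : NeZero p := ⟨by omega⟩
  haveI : NeZero m := ⟨by omega⟩
  haveI : NeZero n := ⟨by omega⟩
  set σ : ZMod p × ZMod p → ZMod m × ZMod n :=
    fun x => ((x.1.val : ZMod m), (x.2.val : ZMod n)) with hσ
  have hsec : ∀ x, torusRed m n p hpm hpn (σ x) = x := by
    intro x
    simp only [torusRed, hσ, map_natCast]
    exact Prod.ext (ZMod.natCast_rightInverse x.1) (ZMod.natCast_rightInverse x.2)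
  have hinj : Function.Injective σ := by
    intro x y hxy
    have := congrArg (torusRed m n p hpm hpn) hxy
    rwa [hsec, hsec] at this
  have hred : ∀ P : ℤ × ℤ, torusRed m n p hpm hpn (torusProj m n P) = torusProj p p P := by
    intro P; simp [torusRed, torusProj, map_intCast]
  -- main transfer
  have key : ∀ k ∈ {k : ℕ | ∃ X : Set (ZMod p × ZMod p), NoThreeInLine p p X ∧ X.ncard = k},
      k ∈ {k : ℕ | ∃ X : Set (ZMod m × ZMod n), NoThreeInLine m n X ∧ X.ncard = k} := by
    rintro k ⟨X, hX, rfl⟩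
    refine ⟨σ '' X, ?_, (Set.ncard_image_of_injective X hinj)⟩
    rintro L ⟨a, b, u, v, huv, rfl⟩ A ⟨x, hx, rfl⟩ B ⟨y, hy, rfl⟩ C ⟨z, hz, rfl⟩ hA hB hC
    have hL' : IsTorusLine p p (torusProj p p '' {P : ℤ × ℤ | ∃ k : ℤ, P = (a + u * k, b + v * k)}) :=
      ⟨a, b, u, v, huv, rfl⟩
    have hred' : ∀ w : ZMod p × ZMod p,
        σ w ∈ torusProj m n '' {P : ℤ × ℤ | ∃ k : ℤ, P = (a + u * k, b + v * k)} →
        w ∈ torusProj p p '' {P : ℤ × ℤ | ∃ k : ℤ, P = (a + u * k, b + v * k)} := by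
      rintro w ⟨Q, hQ, hQ2⟩
      refine ⟨Q, hQ, ?_⟩
      have := congrArg (torusRed m n p hpm hpn) hQ2
      rwa [hred, hsec] at this
    have := hX _ hL' x hx y hy z hz (hred' x hA) (hred' y hB) (hred' z hC)
    rcases this with h | h | h
    · exact Or.inl (congrArg σ h)
    · exact Or.inr (Or.inl (congrArg σ h))
    · exact Or.inr (Or.inr (congrArg σ h))
  -- conclude via csSup
  unfold tau
  apply csSup_le_csSup
  · refine ⟨Nat.card (ZMod m × ZMod n), ?_⟩
    rintro k ⟨X, _, rfl⟩
    have := Set.ncard_le_ncard (Set.subset_univ X) Set.finite_univ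
    simpa [Set.ncard_univ] using this
  · exact ⟨0, ∅, by intro L _ A hA; simp at hA, by simp⟩
  · exact key
end

section
/- Let m and n be integers greater than 1 such that p = gcd(m,n) is an odd prime. Let ρ : T_{m×n} → T_{p×p} be the map induced by reduction modulo p in both coordinates, and for β ∈ {1, 2, …, p−1} let ℓ^β = {π_{p,p}(k, βk) : k ∈ ℤ} ⊆ T_{p×p}. Then for every β ∈ {1, 2, …, p−1}, the preimage ρ⁻¹(ℓ^β) is a line on T_{m×n}. -/
/-- Lemma 4.3: for p = gcd(m,n) an odd prime and β ∈ {1,…,p−1},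
the preimage ρ⁻¹(ℓ^β) is a line on T_{m×n}. -/
theorem preimage_slope_line_is_line (m n p : ℕ) (hm : 1 < m) (hn : 1 < n)
    (hpm : p ∣ m) (hpn : p ∣ n) (hgcd : Nat.gcd m n = p)
    (hp : p.Prime) (hodd : Odd p)
    (β : ℕ) (hβ1 : 1 ≤ β) (hβ2 : β ≤ p - 1) :
    IsTorusLine m n
      (torusRed m n p hpm hpn ⁻¹'
        (torusProj p p '' {P : ℤ × ℤ | ∃ k : ℤ, P = (k, (β : ℤ) * k)})) := by
  haveI : NeZero m := ⟨by omega⟩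
  haveI : NeZero n := ⟨by omega⟩
  haveI : NeZero p := ⟨hp.ne_zero⟩
  -- β is coprime to p
  have hβnd : ¬ p ∣ β := by
    intro h
    have := Nat.le_of_dvd (by omega) h
    omega
  have hβp : Nat.Coprime β p := Nat.coprime_comm.mp (hp.coprime_iff_not_dvd.mpr hβnd)
  -- lift β to a unit of ZMod n
  obtain ⟨U, hU⟩ := ZMod.unitsMap_surjective hpn (ZMod.unitOfCoprime β hβp)
  set w : ℕ := ((U : ZMod n)).val with hw
  set v : ℤ := (w : ℤ) with hv
  have hwn : Nat.Coprime w n := ZMod.val_coe_unit_coprime U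
  have hvn : ((v : ℤ) : ZMod n) = (U : ZMod n) := by
    simp [hv, hw, ZMod.natCast_val, ZMod.cast_id]
  -- v ≡ β mod p
  have hvp : ((v : ℤ) : ZMod p) = ((β : ℤ) : ZMod p) := by
    have h1 : ((v : ℤ) : ZMod p) = ZMod.castHom hpn (ZMod p) ((v : ℤ) : ZMod n) := by
      rw [map_intCast]
    rw [h1, hvn]
    have h2 : ZMod.castHom hpn (ZMod p) (U : ZMod n) = ((ZMod.unitsMap hpn U : (ZMod p)ˣ) : ZMod p) := by
      simp [ZMod.unitsMap_def]
    rw [h2, hU]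
    simp
  have hvβ : (p : ℤ) ∣ v - (β : ℤ) := by
    have := (ZMod.intCast_eq_intCast_iff _ _ _).mp hvp
    exact (Int.ModEq.dvd this.symm)
  refine ⟨0, 0, 1, v, Int.one_gcd, ?_⟩
  ext ⟨x, y⟩
  simp only [Set.mem_preimage, Set.mem_image, Set.mem_setOf_eq, torusRed, torusProj,
    Prod.mk.injEq]
  constructor
  · rintro ⟨P, ⟨k, rfl⟩, hP1, hP2⟩
    set X : ℤ := (x.val : ℤ) with hX
    set Y : ℤ := (y.val : ℤ) with hY
    have hxX : ((X : ℤ) : ZMod m) = x := by simp [hX, ZMod.natCast_val, ZMod.cast_id]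
    have hyY : ((Y : ℤ) : ZMod n) = y := by simp [hY, ZMod.natCast_val, ZMod.cast_id]
    -- congruences mod p
    have h1 : (p : ℤ) ∣ X - k := by
      have : ((k : ℤ) : ZMod p) = ((X : ℤ) : ZMod p) := by
        rw [hP1, ← hxX, map_intCast]
      exact (ZMod.intCast_eq_intCast_iff _ _ _).mp this |>.dvd
    have h2 : (p : ℤ) ∣ Y - (β : ℤ) * k := by
      have : (((β : ℤ) * k : ℤ) : ZMod p) = ((Y : ℤ) : ZMod p) := by
        rw [hP2, ← hyY, map_intCast]
      exact (ZMod.intCast_eq_intCast_iff _ _ _).mp this |>.dvd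
    have h3 : (p : ℤ) ∣ Y - v * X := by
      have : Y - v * X = (Y - (β : ℤ) * k) - v * (X - k) - (v - (β : ℤ)) * k := by ring
      rw [this]
      exact dvd_sub (dvd_sub h2 (Dvd.dvd.mul_left h1 v)) (Dvd.dvd.mul_right hvβ k)
    obtain ⟨c, hc⟩ := h3
    -- gcd(v*m, n) = p
    have hg : Int.gcd (v * (m : ℤ)) (n : ℤ) = p := by
      have : Int.gcd (v * (m : ℤ)) (n : ℤ) = Nat.gcd (w * m) n := by
        rw [hv]; push_cast [Int.gcd_natCast_natCast]; rfl
      rw [this, Nat.Coprime.gcd_mul_left_cancel m hwn, hgcd]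
    -- Bezout
    have hb := Int.gcd_eq_gcd_ab (v * (m : ℤ)) (n : ℤ)
    rw [hg] at hb
    set A := Int.gcdA (v * (m : ℤ)) (n : ℤ) with hA
    set B := Int.gcdB (v * (m : ℤ)) (n : ℤ) with hB
    set T : ℤ := X + (m : ℤ) * (A * c) with hT
    refine ⟨(0 + 1 * T, 0 + v * T), ⟨T, rfl⟩, ?_, ?_⟩
    · dsimp only
      rw [← hxX]
      push_cast [hT]
      simp [ZMod.natCast_self]
    · dsimp only
      rw [← hyY, ZMod.intCast_eq_intCast_iff]
      have key : v * T - Y = (n : ℤ) * (-B * c) := by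
        have h5 : v * X - Y = -((p : ℤ) * c) := by linarith [hc]
        have h6 : (p : ℤ) = v * m * A + n * B := hb
        calc v * T - Y = (v * X - Y) + (v * m * A) * c := by rw [hT]; ring
          _ = -((p:ℤ) * c) + ((p:ℤ) - n * B) * c := by rw [h5]; rw [h6]; ring
          _ = (n : ℤ) * (-B * c) := by ring
      exact Int.modEq_iff_dvd.mpr ⟨B * c, by linarith [key]⟩
  · rintro ⟨P, ⟨k, rfl⟩, hP1, hP2⟩
    dsimp only at hP1 hP2
    refine ⟨(k, (β : ℤ) * k), ⟨k, rfl⟩, ?_, ?_⟩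
    · rw [← hP1, map_intCast]
      push_cast
      ring
    · rw [← hP2, map_intCast]
      push_cast
      rw [show ((v : ZMod p) * (k : ZMod p)) = ((v:ℤ) : ZMod p) * k by push_cast; ring]
      rw [hvp]
      push_cast
      ring
end

section
/- Let m and n be integers greater than 1 and set p = gcd(m,n), with p > 1. Let ρ : T_{m×n} → T_{p×p} be the map induced by reduction modulo p in both coordinates, and let ℓ^∞ = {π_{p,p}(0, k) : k ∈ ℤ} ⊆ T_{p×p}. If gcd(m, p·n) = p, then the preimage ρ⁻¹(ℓ^∞) is a line on T_{m×n}. -/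
/-- Lemma 4.4(1): if gcd(m, p·n) = p (p = gcd(m,n) > 1), then
ρ⁻¹(ℓ^∞) is a line on T_{m×n}. -/
theorem preimage_vertical_line_is_line (m n p : ℕ) (hm : 1 < m) (hn : 1 < n)
    (hpm : p ∣ m) (hpn : p ∣ n) (hgcd : Nat.gcd m n = p) (hp1 : 1 < p)
    (h : Nat.gcd m (p * n) = p) :
    IsTorusLine m n
      (torusRed m n p hpm hpn ⁻¹'
        (torusProj p p '' {P : ℤ × ℤ | ∃ k : ℤ, P = (0, k)})) := by
  haveI : NeZero p := ⟨by omega⟩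
  haveI : NeZero m := ⟨by omega⟩
  haveI : NeZero n := ⟨by omega⟩
  obtain ⟨m', hm'⟩ := id hpm
  have hcop : Nat.Coprime m' n := by
    have h2 : Nat.gcd (p * m') (p * n) = p * Nat.gcd m' n := Nat.gcd_mul_left p m' n
    rw [← hm', h] at h2
    nlinarith [Nat.gcd_le_left (n := m') (m := n)]
  have hbez : (m' : ℤ) * Nat.gcdA m' n + (n : ℤ) * Nat.gcdB m' n = 1 := by
    have := Nat.gcd_eq_gcd_ab m' n
    rw [hcop] at this
    push_cast at this
    linarith
  set s : ℤ := Nat.gcdA m' n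
  set t : ℤ := Nat.gcdB m' n
  refine ⟨0, 0, (p : ℤ), 1, by simp [Int.gcd], ?_⟩
  ext ⟨x, y⟩
  simp only [Set.mem_preimage, Set.mem_image, Set.mem_setOf_eq, torusRed, torusProj,
    zero_add, one_mul]
  constructor
  · rintro ⟨P, ⟨k, rfl⟩, hEq⟩
    obtain ⟨h1, h2⟩ := Prod.mk.injEq .. ▸ hEq
    set a : ℤ := (x.val : ℤ) with ha
    set b : ℤ := (y.val : ℤ) with hb
    have hxa : ((a : ℤ) : ZMod m) = x := by
      simp [ha, ZMod.natCast_val, ZMod.cast_id]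
    have hyb : ((b : ℤ) : ZMod n) = y := by
      simp [hb, ZMod.natCast_val, ZMod.cast_id]
    have hpa : (p : ℤ) ∣ a := by
      have h0 : ((a : ℤ) : ZMod p) = 0 := by
        have := h1
        rw [← hxa] at this
        simpa [map_intCast] using this.symm
      exact (ZMod.intCast_zmod_eq_zero_iff_dvd a p).mp h0
    obtain ⟨c, hc⟩ := hpa
    set K : ℤ := c + (m' : ℤ) * s * (b - c) with hK
    refine ⟨((p : ℤ) * K, K), ⟨K, rfl⟩, ?_⟩
    have key1 : (((p : ℤ) * K : ℤ) : ZMod m) = x := by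
      rw [← hxa, ZMod.intCast_eq_intCast_iff]
      have hmm : (m : ℤ) = (p : ℤ) * (m' : ℤ) := by exact_mod_cast hm'
      refine Int.ModEq.symm (Int.modEq_iff_dvd.mpr ⟨s * (b - c), ?_⟩)
      rw [hmm, hK, hc]; ring
    have key2 : ((K : ℤ) : ZMod n) = y := by
      rw [← hyb, ZMod.intCast_eq_intCast_iff]
      refine Int.ModEq.symm (Int.modEq_iff_dvd.mpr ⟨t * (c - b), ?_⟩)
      have hms : (m' : ℤ) * s = 1 - (n : ℤ) * t := by linarith
      rw [hK, hms]; ring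
    simp [key1, key2]
  · rintro ⟨P, ⟨k, rfl⟩, hEq⟩
    obtain ⟨h1, h2⟩ := Prod.mk.injEq .. ▸ hEq
    refine ⟨(0, k), ⟨k, rfl⟩, ?_⟩
    rw [← h1, ← h2]
    have e1 : (ZMod.castHom hpm (ZMod p)) (((p : ℤ) * k : ℤ) : ZMod m) = 0 := by
      rw [map_intCast]
      exact (ZMod.intCast_zmod_eq_zero_iff_dvd ((p:ℤ)*k) p).mpr ⟨k, rfl⟩
    have e2 : (ZMod.castHom hpn (ZMod p)) ((k : ℤ) : ZMod n) = ((k : ℤ) : ZMod p) :=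
      map_intCast _ _
    simp only [e1, e2]
    simp
end

section
/- Let m and n be integers greater than 1 and set p = gcd(m,n), with p > 1. Let ρ : T_{m×n} → T_{p×p} be the map induced by reduction modulo p in both coordinates, and let ℓ^0 = {π_{p,p}(k, 0) : k ∈ ℤ} ⊆ T_{p×p}. If gcd(p·m, n) = p, then the preimage ρ⁻¹(ℓ^0) is a line on T_{m×n}. -/
/-- Lemma 4.4(2): if gcd(p·m, n) = p (p = gcd(m,n) > 1), then
ρ⁻¹(ℓ^0) is a line on T_{m×n}. -/
theorem preimage_horizontal_line_is_line (m n p : ℕ) (hm : 1 < m) (hn : 1 < n)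
    (hpm : p ∣ m) (hpn : p ∣ n) (hgcd : Nat.gcd m n = p) (hp1 : 1 < p)
    (h : Nat.gcd (p * m) n = p) :
    IsTorusLine m n
      (torusRed m n p hpm hpn ⁻¹'
        (torusProj p p '' {P : ℤ × ℤ | ∃ k : ℤ, P = (k, 0)})) := by
  have hp0 : 0 < p := by omega
  haveI : NeZero p := ⟨by omega⟩
  haveI : NeZero m := ⟨by omega⟩
  haveI : NeZero n := ⟨by omega⟩
  obtain ⟨n', hn'⟩ := id hpn
  have hcop : Nat.Coprime m n' := by
    have h2 : Nat.gcd (p * m) (p * n') = p := by rw [← hn']; exact h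
    rw [Nat.gcd_mul_left] at h2
    have : p * Nat.gcd m n' = p * 1 := by omega
    exact Nat.eq_of_mul_eq_mul_left hp0 this
  refine ⟨0, 0, 1, (p : ℤ), by simp [Int.gcd], ?_⟩
  ext ⟨x, y⟩
  simp only [Set.mem_preimage, Set.mem_image, Set.mem_setOf_eq, torusRed, torusProj,
    Prod.mk.injEq]
  constructor
  · rintro ⟨P, ⟨k, rfl⟩, h1, h2⟩
    -- h2 : ((0:ℤ) : ZMod p) = castHom hpn y
    have hy0 : (ZMod.castHom hpn (ZMod p)) y = 0 := by
      rw [← h2]; simp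
    have hyval : ((y.val : ℕ) : ZMod n) = y := ZMod.natCast_rightInverse y
    have hpy : p ∣ y.val := by
      have : ((y.val : ℕ) : ZMod p) = 0 := by
        have := congrArg (ZMod.castHom hpn (ZMod p)) hyval
        rw [map_natCast] at this
        rw [this, hy0]
      exact (ZMod.natCast_eq_zero_iff _ _).mp this
    obtain ⟨K, hK1, hK2⟩ := Nat.chineseRemainder hcop x.val (y.val / p)
    refine ⟨((K : ℤ), (p : ℤ) * K), ⟨(K : ℤ), by simp⟩, ?_, ?_⟩
    · have : ((K : ℕ) : ZMod m) = ((x.val : ℕ) : ZMod m) :=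
        (ZMod.natCast_eq_natCast_iff _ _ _).mpr hK1
      push_cast
      rw [this, ZMod.natCast_rightInverse x]
    · have hmod : p * K ≡ p * (y.val / p) [MOD p * n'] := Nat.ModEq.mul_left' p hK2
      rw [Nat.mul_div_cancel' hpy, ← hn'] at hmod
      have : ((p * K : ℕ) : ZMod n) = ((y.val : ℕ) : ZMod n) :=
        (ZMod.natCast_eq_natCast_iff _ _ _).mpr hmod
      push_cast at this ⊢
      rw [this, hyval]
  · rintro ⟨P, ⟨k, rfl⟩, hx, hy⟩
    refine ⟨(k, 0), ⟨k, rfl⟩, ?_, ?_⟩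
    · rw [← hx]; push_cast; simp [map_intCast]
    · rw [← hy]
      have e : ((0 + (p:ℤ) * k : ℤ) : ZMod n) = (((p:ℤ) * k : ℤ) : ZMod n) := by push_cast; ring
      calc ((0:ℤ) : ZMod p) = (((p:ℤ) * k : ℤ) : ZMod p) := by push_cast; simp
        _ = _ := by
          show _ = ZMod.cast ((0 + 1 * k, 0 + (p:ℤ) * k).2 : ZMod n)
          simp only [Prod.snd]
          rw [e, ZMod.cast_intCast hpn]
end

section
/- Let p be an odd prime. Then τ(T_{p×p}) = p + 1; that is, the maximum size of a subset of T_{p×p} with no three points on a common line is exactly p + 1. -/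
/-! Modulo a prime `p`, three points lie on a common torus line exactly when they are collinear in
the affine plane over `𝔽_p`, so `τ(T_{p×p})` is the largest size of an arc (no three points
collinear) in that plane. If an arc had `p + 2` points, each of the `p + 1` lines through one of
its points would meet it exactly once more, so every line meets it in `0` or `2` points; the lines
through a point outside the arc then split it into pairs, contradicting that `p + 2` is odd.
Conversely, for a nonsquare `d` the ellipse `x² - d y² = 1` is an arc, and its rational
parametrization from `(-1, 0)` shows that it has `p + 1` points. -/

variable {F : Type*}

section CommRing

variable [CommRing F]

def Col (A B C : F × F) : Prop :=
  (B.1 - A.1) * (C.2 - A.2) = (B.2 - A.2) * (C.1 - A.1)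

def IsArc (X : Set (F × F)) : Prop :=
  ∀ A ∈ X, ∀ B ∈ X, ∀ C ∈ X, Col A B C → A = B ∨ A = C ∨ B = C

theorem IsArc.mono {X Y : Set (F × F)} (hY : IsArc Y) (hXY : X ⊆ Y) : IsArc X :=
  fun A hA B hB C hC => hY A (hXY hA) B (hXY hB) C (hXY hC)

theorem col_swap {A B C : F × F} : Col A B C ↔ Col B A C := by
  unfold Col
  constructor <;> intro h <;> linear_combination -h

end CommRing

section Field

variable [Field F]

theorem Col.exists_eq_add_smul {A B C : F × F} (h : Col A B C) (hAB : A ≠ B) :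
    ∃ s : F, C = A + s • (B - A) := by
  unfold Col at h
  by_cases h1 : B.1 = A.1
  · have h2 : B.2 - A.2 ≠ 0 := sub_ne_zero.2 fun h2 => hAB (Prod.ext h1 h2).symm
    have hC1 : C.1 = A.1 := by
      rw [h1, sub_self, zero_mul, zero_eq_mul] at h
      exact sub_eq_zero.1 (h.resolve_left h2)
    refine ⟨(C.2 - A.2) / (B.2 - A.2), Prod.ext ?_ ?_⟩
    · simp [h1, hC1]
    · simp [div_mul_cancel₀ _ h2]
  · have h1 : B.1 - A.1 ≠ 0 := sub_ne_zero.2 h1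
    refine ⟨(C.1 - A.1) / (B.1 - A.1), Prod.ext ?_ ?_⟩
    · simp [div_mul_cancel₀ _ h1]
    · simp only [Prod.snd_add, Prod.smul_snd, Prod.snd_sub, smul_eq_mul]
      field_simp
      linear_combination h

variable [DecidableEq F]

def direction (A Q : F × F) : Option F :=
  if Q.1 = A.1 then none else some ((Q.2 - A.2) / (Q.1 - A.1))

theorem direction_comm (A Q : F × F) : direction A Q = direction Q A := by
  unfold direction
  by_cases h : Q.1 = A.1
  · simp [h]
  · rw [if_neg h, if_neg (Ne.symm h), ← neg_sub A.2, ← neg_sub A.1, neg_div_neg_eq]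

theorem col_iff_direction_eq {A Q R : F × F} (hQ : Q ≠ A) (hR : R ≠ A) :
    Col A Q R ↔ direction A Q = direction A R := by
  unfold Col direction
  by_cases hQ1 : Q.1 = A.1 <;> by_cases hR1 : R.1 = A.1
  · simp [hQ1, hR1]
  · have hQ2 : Q.2 - A.2 ≠ 0 := sub_ne_zero.2 fun h => hQ (Prod.ext hQ1 h)
    simp [hQ1, hR1, hQ2, sub_eq_zero]
  · have hR2 : R.2 - A.2 ≠ 0 := sub_ne_zero.2 fun h => hR (Prod.ext hR1 h)
    simp [hQ1, hR1, hR2, sub_eq_zero]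
  · rw [if_neg hQ1, if_neg hR1, Option.some_inj,
      div_eq_div_iff (sub_ne_zero.2 hQ1) (sub_ne_zero.2 hR1)]
    constructor <;> intro h <;> linear_combination -h

end Field

section FiniteField

variable [Field F] [DecidableEq F] {Y : Finset (F × F)}

theorem IsArc.card_filter_direction_le_one (hY : IsArc (Y : Set (F × F))) {B : F × F}
    (hB : B ∈ Y) (d : Option F) : ((Y.erase B).filter (direction B · = d)).card ≤ 1 := by
  refine Finset.card_le_one.2 fun Q hQ R hR => ?_
  simp only [Finset.mem_filter, Finset.mem_erase] at hQ hR
  have hcol : Col B Q R := (col_iff_direction_eq hQ.1.1 hR.1.1).2 (hQ.2.trans hR.2.symm)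
  rcases hY B hB Q hQ.1.2 R hR.1.2 hcol with h | h | h
  exacts [absurd h.symm hQ.1.1, absurd h.symm hR.1.1, h]

variable [Fintype F]

theorem IsArc.card_filter_direction_eq_one (hY : IsArc (Y : Set (F × F)))
    (hcard : Y.card = Fintype.card F + 2) {B : F × F} (hB : B ∈ Y) (d : Option F) :
    ((Y.erase B).filter (direction B · = d)).card = 1 := by
  have hsum : ∑ e : Option F, ((Y.erase B).filter (direction B · = e)).card
      = ∑ _e : Option F, 1 := by
    rw [← Finset.card_eq_sum_card_fiberwise (fun _ _ => Finset.mem_univ _),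
      Finset.card_erase_of_mem hB, hcard, Finset.sum_const, Finset.card_univ,
      Fintype.card_option, smul_eq_mul, mul_one]
    rfl
  exact (Finset.sum_eq_sum_iff_of_le fun e _ => hY.card_filter_direction_le_one hB e).1
    hsum d (Finset.mem_univ d)

theorem IsArc.even_card_filter_direction (hY : IsArc (Y : Set (F × F)))
    (hcard : Y.card = Fintype.card F + 2) {A : F × F} (hA : A ∉ Y) (d : Option F) :
    Even (Y.filter (direction A · = d)).card := by
  obtain hempty | ⟨Q, hQ⟩ := (Y.filter (direction A · = d)).eq_empty_or_nonempty
  · simp [hempty]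
  rw [Finset.mem_filter] at hQ
  have hne : ∀ {R}, R ∈ Y → R ≠ A := fun hR h => hA (h ▸ hR)
  have hline :
      Y.filter (direction A · = d) = insert Q ((Y.erase Q).filter (direction Q · = d)) := by
    ext R
    simp only [Finset.mem_filter, Finset.mem_insert, Finset.mem_erase]
    by_cases hRQ : R = Q
    · simp [hRQ, hQ]
    simp only [hRQ, false_or, ne_eq, not_false_eq_true, true_and]
    refine and_congr_right fun hRY => ?_
    rw [← hQ.2, eq_comm, ← col_iff_direction_eq (hne hQ.1) (hne hRY), col_swap,
      col_iff_direction_eq (Ne.symm (hne hQ.1)) hRQ, direction_comm Q A]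
    exact eq_comm
  rw [hline, Finset.card_insert_of_notMem (by simp),
    hY.card_filter_direction_eq_one hcard hQ.1 d]
  exact even_two

theorem IsArc.card_le (hq : Odd (Fintype.card F)) (hY : IsArc (Y : Set (F × F))) :
    Y.card ≤ Fintype.card F + 1 := by
  by_contra! hlt
  obtain ⟨Z, hZY, hZ⟩ :=
    Finset.exists_subset_card_eq (show Fintype.card F + 2 ≤ Y.card by omega)
  have hZarc : IsArc (Z : Set (F × F)) := hY.mono (by exact_mod_cast hZY)
  have hq3 : 3 ≤ Fintype.card F := by
    obtain ⟨k, hk⟩ := hq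
    have := Fintype.one_lt_card (α := F)
    omega
  obtain ⟨A, hA⟩ : Zᶜ.Nonempty := by
    rw [← Finset.card_pos, Finset.card_compl, hZ, Fintype.card_prod]
    have : Fintype.card F + 2 < Fintype.card F * Fintype.card F := by nlinarith
    omega
  have heven : Even Z.card := by
    rw [Finset.card_eq_sum_card_fiberwise (f := direction A) (fun _ _ => Finset.mem_univ _)]
    exact Finset.even_sum _ fun d _ =>
      hZarc.even_card_filter_direction hZ (Finset.mem_compl.1 hA) d
  obtain ⟨k, hk⟩ := hq
  obtain ⟨j, hj⟩ := heven
  omega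

theorem IsArc.ncard_le (hq : Odd (Fintype.card F)) {X : Set (F × F)} (hX : IsArc X) :
    X.ncard ≤ Fintype.card F + 1 := by
  classical
  rw [Set.ncard_eq_toFinset_card X (Set.toFinite X)]
  exact IsArc.card_le hq (by rwa [Set.Finite.coe_toFinset])

end FiniteField

section Ellipse

variable [Field F]

theorem eq_zero_of_sq_sub_mul_sq_eq_zero {d a b : F} (hd : ¬IsSquare d)
    (h : a ^ 2 - d * b ^ 2 = 0) : a = 0 ∧ b = 0 := by
  have hb : b = 0 := by
    by_contra hb
    exact hd ⟨a / b, by field_simp; linear_combination -h⟩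
  exact ⟨pow_eq_zero_iff two_ne_zero |>.1 (by simpa [hb] using h), hb⟩

def ellipse (d : F) : Set (F × F) :=
  {P | P.1 ^ 2 - d * P.2 ^ 2 = 1}

/-- On the line `Q + s • u` the equation of the ellipse, which holds at `s = 0, 1`, reduces to
`s (s - 1) (u₁² - d u₂²) = 0`, and the form `x² - d y²` is anisotropic. -/
theorem isArc_ellipse {d : F} (hd : ¬IsSquare d) : IsArc (ellipse d) := by
  intro Q hQ R hR S hS hcol
  by_cases hQR : Q = R
  · exact Or.inl hQR
  obtain ⟨s, rfl⟩ := hcol.exists_eq_add_smul hQR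
  simp only [ellipse, Set.mem_ofPred_eq, Prod.fst_add, Prod.snd_add, Prod.smul_fst,
    Prod.smul_snd, Prod.fst_sub, Prod.snd_sub, smul_eq_mul] at hQ hR hS
  have hroots : s * (s - 1) * ((R.1 - Q.1) ^ 2 - d * (R.2 - Q.2) ^ 2) = 0 := by
    linear_combination hS - s * hR + (s - 1) * hQ
  have hu : (R.1 - Q.1) ^ 2 - d * (R.2 - Q.2) ^ 2 ≠ 0 := fun h => by
    obtain ⟨h1, h2⟩ := eq_zero_of_sq_sub_mul_sq_eq_zero hd h
    exact hQR (Prod.ext (sub_eq_zero.1 h1).symm (sub_eq_zero.1 h2).symm)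
  rcases mul_eq_zero.1 ((mul_eq_zero.1 hroots).resolve_right hu) with hs | hs
  · right; left; simp [hs]
  · right; right; simp [sub_eq_zero.1 hs]

theorem one_sub_mul_sq_ne_zero {d : F} (hd : ¬IsSquare d) (t : F) : 1 - d * t ^ 2 ≠ 0 :=
  fun h => one_ne_zero (eq_zero_of_sq_sub_mul_sq_eq_zero hd (a := 1) (by simpa using h)).1

/-- Rational parametrization of `ellipse d` by the lines through `(-1, 0)`: `some t` is the
second intersection with the line of slope `t`, and `none` is `(-1, 0)` itself. -/
def ellipseParam (d : F) : Option F → F × F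
  | none => (-1, 0)
  | some t => ((1 + d * t ^ 2) / (1 - d * t ^ 2), 2 * t / (1 - d * t ^ 2))

theorem ellipseParam_mem {d : F} (hd : ¬IsSquare d) (i : Option F) :
    ellipseParam d i ∈ ellipse d := by
  cases i with
  | none => simp [ellipseParam, ellipse]
  | some t =>
    have := one_sub_mul_sq_ne_zero hd t
    simp only [ellipseParam, ellipse, Set.mem_ofPred_eq]
    field_simp
    ring

theorem ellipseParam_injective {d : F} (h2 : (2 : F) ≠ 0) (hd : ¬IsSquare d) :
    Function.Injective (ellipseParam d) := by
  have hfst : ∀ t : F, (ellipseParam d (some t)).1 + 1 = 2 / (1 - d * t ^ 2) := fun t => by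
    have := one_sub_mul_sq_ne_zero hd t
    simp only [ellipseParam]
    field_simp
    ring
  have hslope : ∀ t : F, (ellipseParam d (some t)).2 / ((ellipseParam d (some t)).1 + 1) = t :=
    fun t => by
      have h0 : 1 - t ^ 2 * d ≠ 0 := by rw [mul_comm]; exact one_sub_mul_sq_ne_zero hd t
      rw [hfst]
      simp only [ellipseParam]
      field_simp
  have hne : ∀ t : F, (ellipseParam d (some t)).1 ≠ -1 := fun t h => by
    have := hfst t
    rw [h, neg_add_cancel] at this
    exact div_ne_zero h2 (one_sub_mul_sq_ne_zero hd t) this.symm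
  rintro (_ | t) (_ | s) h
  · rfl
  · exact absurd (congrArg Prod.fst h).symm (hne s)
  · exact absurd (congrArg Prod.fst h) (hne t)
  · rw [← hslope t, ← hslope s, h]

theorem exists_isArc_ncard_eq [Fintype F] (hF : ringChar F ≠ 2) :
    ∃ X : Set (F × F), IsArc X ∧ X.ncard = Fintype.card F + 1 := by
  obtain ⟨d, hd⟩ := FiniteField.exists_nonsquare hF
  refine ⟨Set.range (ellipseParam d), (isArc_ellipse hd).mono ?_, ?_⟩
  · rintro _ ⟨i, rfl⟩
    exact ellipseParam_mem hd i
  · rw [Set.ncard_range_of_injective (ellipseParam_injective (Ring.two_ne_zero hF) hd),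
      Nat.card_eq_fintype_card, Fintype.card_option]

end Ellipse

section Torus

theorem IsTorusLine.col {n : ℕ} {L : Set (ZMod n × ZMod n)} (hL : IsTorusLine n n L)
    {A B C : ZMod n × ZMod n} (hA : A ∈ L) (hB : B ∈ L) (hC : C ∈ L) : Col A B C := by
  obtain ⟨a, b, u, v, -, rfl⟩ := hL
  obtain ⟨_, ⟨k₁, rfl⟩, rfl⟩ := hA
  obtain ⟨_, ⟨k₂, rfl⟩, rfl⟩ := hB
  obtain ⟨_, ⟨k₃, rfl⟩, rfl⟩ := hC
  simp only [Col, torusProj]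
  push_cast
  ring

theorem mem_torusLine {n : ℕ} [NeZero n] (a b u v : ℤ) (t : ZMod n) :
    ((a : ZMod n) + u * t, (b : ZMod n) + v * t) ∈
      torusProj n n '' {P : ℤ × ℤ | ∃ k : ℤ, P = (a + u * k, b + v * k)} :=
  ⟨(a + u * t.val, b + v * t.val), ⟨t.val, rfl⟩, by simp [torusProj]⟩

variable {p : ℕ} [Fact p.Prime]

theorem exists_coprime_smul_eq (w : ZMod p × ZMod p) :
    ∃ u v : ℤ, Int.gcd u v = 1 ∧ ∃ c : ZMod p, w = c • ((u : ZMod p), (v : ZMod p)) := by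
  by_cases h1 : w.1 = 0
  · refine ⟨0, 1, by simp, w.2, Prod.ext ?_ ?_⟩ <;> simp [h1]
  · refine ⟨1, (w.2 / w.1).val, by simp, w.1, Prod.ext ?_ ?_⟩
    · simp
    · simp [mul_div_cancel₀ _ h1]

theorem Col.exists_isTorusLine {A B C : ZMod p × ZMod p} (h : Col A B C) (hAB : A ≠ B) :
    ∃ L, IsTorusLine p p L ∧ A ∈ L ∧ B ∈ L ∧ C ∈ L := by
  obtain ⟨s, rfl⟩ := h.exists_eq_add_smul hAB
  obtain ⟨u, v, huv, c, hc⟩ := exists_coprime_smul_eq (B - A)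
  have hmem : ∀ t : ZMod p, A + t • (B - A) ∈
      torusProj p p '' {P | ∃ k : ℤ, P = ((A.1.val : ℤ) + u * k, (A.2.val : ℤ) + v * k)} := by
    intro t
    convert mem_torusLine (A.1.val : ℤ) (A.2.val : ℤ) u v (t * c) using 1
    rw [hc]
    ext <;> simp <;> ring
  refine ⟨_, ⟨_, _, u, v, huv, rfl⟩, ?_, ?_, hmem s⟩
  · simpa using hmem 0
  · simpa using hmem 1

theorem noThreeInLine_iff_isArc (X : Set (ZMod p × ZMod p)) :
    NoThreeInLine p p X ↔ IsArc X := by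
  constructor
  · intro hX A hA B hB C hC hcol
    by_cases hAB : A = B
    · exact Or.inl hAB
    obtain ⟨L, hL, hAL, hBL, hCL⟩ := hcol.exists_isTorusLine hAB
    exact hX L hL A hA B hB C hC hAL hBL hCL
  · intro hX L hL A hA B hB C hC hAL hBL hCL
    exact hX A hA B hB C hC (hL.col hAL hBL hCL)

end Torus

/-- Theorem 4.6: for an odd prime p, τ(T_{p×p}) = p + 1. -/
theorem tau_prime_torus (p : ℕ) (hp : p.Prime) (hodd : Odd p) :
    tau p p = p + 1 := by
  have := Fact.mk hp
  have hcard : Fintype.card (ZMod p) = p := ZMod.card p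
  refine IsGreatest.csSup_eq ⟨?_, ?_⟩
  · have hchar : ringChar (ZMod p) ≠ 2 := by
      rw [ZMod.ringChar_zmod_n]
      rintro rfl
      exact Nat.not_odd_iff_even.2 even_two hodd
    obtain ⟨X, hX, hXcard⟩ := exists_isArc_ncard_eq hchar
    exact ⟨X, (noThreeInLine_iff_isArc X).2 hX, hXcard.trans (by rw [hcard])⟩
  · rintro k ⟨X, hX, rfl⟩
    simpa [hcard] using ((noThreeInLine_iff_isArc X).1 hX).ncard_le (by rwa [hcard])
end
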